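/- arXiv:1909.00063 — 4 statements merged into one kernel-verified Lean document; each statement's English description precedes it below -/
import Mathlib

section
/- Let (M, d) be a metric space. Let T₁ be an r₁-lattice and T₂ an r₂-lattice of M (each Tᵢ is rᵢ-separated and its open rᵢ-balls cover M), and assume T₁, T₂, and T := T₁ ∪ T₂ are uniformly locally finite. For a uniformly locally finite subset S ⊆ M, let ℬ(S) be the Banach space of bounded functions S → ℝ with the sup norm, let V(S) ⊆ ℬ(S) be the linear subspace of all f for which there exist C > 0 and a : S × S → ℝ with |a(x,y)| ≤ C for all x, y, a(x,y) = 0 whenever d(x,y) > C, and f(x) = Σ_{y ∈ S} (a(x,y) − a(y,x)) for every x ∈ S (each sum being finite by uniform local finiteness), and let V̄(S) be the closure of V(S) in the sup norm. Then the extension-by-zero map ℬ(T₁) → ℬ(T) (extend f ∈ ℬ(T₁) by 0 on T \ T₁) maps V̄(T₁) into V̄(T) and induces a linear isomorphism ℬ(T₁)/V̄(T₁) ≅ ℬ(T)/V̄(T); by symmetry, ℬ(T₁)/V̄(T₁) ≅ ℬ(T₂)/V̄(T₂). Hence the bounded-geometry cohomology H⁰_b(M/TM) = ℬ(T)/V̄(T)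 is independent of the choice of lattice T and of the radius r. -/
open Metric
open scoped ENNReal

noncomputable section

set_option synthInstance.maxHeartbeats 400000
set_option maxHeartbeats 800000
set_option linter.unusedSectionVars false

variable {M : Type*} [MetricSpace M]

/-- The set of elementary "transfer" functions on a subset `S` of `M`, inside the space
`ℬ(S) = ℓ^∞(S)` of bounded real-valued functions on `S`: those `f` for which there are
`C > 0` and coefficients `a : S × S → ℝ` with `|a(x,y)| ≤ C`, `a(x,y) = 0` whenever
`d(x,y) > C`, and `f(x) = Σ_y (a(x,y) − a(y,x))`. -/
def TransferSet (S : Set M) : Set (lp (fun _ : S => ℝ) ⊤) :=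
  {f | ∃ C : ℝ, 0 < C ∧ ∃ a : S → S → ℝ,
    (∀ x y, |a x y| ≤ C) ∧
    (∀ x y : S, C < dist (x : M) (y : M) → a x y = 0) ∧
    (∀ x, f x = ∑ᶠ y, (a x y - a y x))}

/-- The transfer subspace `V(S) ⊆ ℬ(S)`. -/
def TransferSub (S : Set M) : Submodule ℝ (lp (fun _ : S => ℝ) ⊤) :=
  Submodule.span ℝ (TransferSet S)

/-- The sup-norm closure `V̄(S)` of the transfer subspace. -/
def TransferClosure (S : Set M) : Submodule ℝ (lp (fun _ : S => ℝ) ⊤) :=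
  (TransferSub S).topologicalClosure

/-- A subset `S` of a metric space is uniformly locally finite if for every `R > 0` there
is `N ∈ ℕ` such that every closed `R`-ball contains at most `N` points of `S`. -/
def UnifLocFinite (S : Set M) : Prop :=
  ∀ R : ℝ, 0 < R → ∃ N : ℕ, ∀ x : M,
    (S ∩ closedBall x R).Finite ∧ (S ∩ closedBall x R).ncard ≤ N

open scoped Classical in
/-- Extension by zero of a bounded function on `T₁` to a function on `T`. -/
def extendFun (T₁ T : Set M) (f : lp (fun _ : T₁ => ℝ) ⊤) (x : T) : ℝ :=
  if h : (x : M) ∈ T₁ then f ⟨x, h⟩ else 0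

lemma extendFun_memℓp (T₁ T : Set M) (f : lp (fun _ : T₁ => ℝ) ⊤) :
    Memℓp (extendFun T₁ T f) ⊤ := by
  apply memℓp_infty
  refine ⟨‖f‖, ?_⟩
  rintro r ⟨x, rfl⟩
  show ‖extendFun T₁ T f x‖ ≤ ‖f‖
  rw [extendFun]
  split_ifs with h
  · exact lp.norm_apply_le_norm ENNReal.top_ne_zero f ⟨x, h⟩
  · rw [norm_zero]; exact norm_nonneg f

/-- Extension by zero, as a map `ℬ(T₁) → ℬ(T)`. -/
def extendBdd (T₁ T : Set M) (f : lp (fun _ : T₁ => ℝ) ⊤) : lp (fun _ : T => ℝ) ⊤ :=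
  ⟨extendFun T₁ T f, extendFun_memℓp T₁ T f⟩

/-! ### Auxiliary development -/

open scoped Classical

section Aux

variable {M : Type*} [MetricSpace M]

lemma bg_lp_add_apply {α : Type*} (f g : lp (fun _ : α => ℝ) ⊤) (x : α) :
    (f + g) x = f x + g x := by rw [lp.coeFn_add]; rfl

lemma bg_lp_smul_apply {α : Type*} (c : ℝ) (f : lp (fun _ : α => ℝ) ⊤) (x : α) :
    (c • f) x = c * f x := by rw [lp.coeFn_smul]; rfl

lemma bg_lp_sub_apply {α : Type*} (f g : lp (fun _ : α => ℝ) ⊤) (x : α) :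
    (f - g) x = f x - g x := by rw [lp.coeFn_sub]; rfl

lemma bg_ulf_finite {W : Set M} (h : UnifLocFinite W) {R : ℝ} (hR : 0 < R) (x : M) :
    {y : W | dist (y : M) x ≤ R}.Finite := by
  obtain ⟨N, hN⟩ := h R hR
  refine (((hN x).1).preimage (Subtype.coe_injective.injOn)).subset ?_
  intro y hy
  exact ⟨y.2, Metric.mem_closedBall.2 hy⟩

lemma bg_card_le {W : Set M} {N : ℕ} {x : M} {R : ℝ}
    (hfin : (W ∩ Metric.closedBall x R).Finite)
    (hcard : (W ∩ Metric.closedBall x R).ncard ≤ N)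
    {A : Finset W} (hA : ∀ y ∈ A, dist (y : M) x ≤ R) : A.card ≤ N := by
  have h1 : ((fun y : W => (y : M)) '' (A : Set W)) ⊆ W ∩ Metric.closedBall x R := by
    rintro _ ⟨y, hy, rfl⟩
    exact ⟨y.2, Metric.mem_closedBall.2 (hA y hy)⟩
  calc A.card = (A : Set W).ncard := (Set.ncard_coe_finset _).symm
    _ = ((fun y : W => (y : M)) '' (A : Set W)).ncard :=
        (Set.ncard_image_of_injective _ Subtype.coe_injective).symm
    _ ≤ (W ∩ Metric.closedBall x R).ncard := Set.ncard_le_ncard h1 hfin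
    _ ≤ N := hcard

variable {r : ℝ} {S U : Set M}

/-- Inclusion of subtypes. -/
def bgIncl (hSU : S ⊆ U) : S → U := fun s => ⟨(s : M), hSU s.2⟩

lemma bgIncl_injective (hSU : S ⊆ U) : Function.Injective (bgIncl hSU) := by
  intro a b hab
  exact Subtype.ext (congrArg (fun u : U => (u : M)) hab)

/-- Push-forward of a bounded function along the fibers of `π`. -/
def bgPfun (π : U → S) (f : lp (fun _ : U => ℝ) ⊤) (t : S) : ℝ :=
  ∑ᶠ u ∈ {u : U | π u = t}, f u

section Pi

variable (π : U → S)

lemma bg_fiber_finite (hr : 0 < r) (hulfU : UnifLocFinite U)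
    (hπd : ∀ u : U, dist (u : M) ((π u) : M) < r) (t : S) :
    {u : U | π u = t}.Finite := by
  refine (bg_ulf_finite hulfU hr (t : M)).subset ?_
  intro u hu
  have : π u = t := hu
  have h2 := hπd u
  rw [this] at h2
  exact le_of_lt h2

lemma bg_Pfun_eq (hr : 0 < r) (hulfU : UnifLocFinite U)
    (hπd : ∀ u : U, dist (u : M) ((π u) : M) < r) (f : lp (fun _ : U => ℝ) ⊤) (t : S) :
    bgPfun π f t = ∑ u ∈ (bg_fiber_finite π hr hulfU hπd t).toFinset, f u :=
  finsum_mem_eq_finite_toFinset_sum _ _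

lemma bg_fiber_card_le (hr : 0 < r) (hulfU : UnifLocFinite U)
    (hπd : ∀ u : U, dist (u : M) ((π u) : M) < r) {N : ℕ}
    (hN : ∀ x : M, (U ∩ Metric.closedBall x r).Finite ∧
      (U ∩ Metric.closedBall x r).ncard ≤ N) (t : S) :
    (bg_fiber_finite π hr hulfU hπd t).toFinset.card ≤ N := by
  refine bg_card_le (hN (t : M)).1 (hN (t : M)).2 ?_
  intro y hy
  rw [Set.Finite.mem_toFinset] at hy
  have : π y = t := hy
  have h2 := hπd y
  rw [this] at h2
  exact le_of_lt h2

lemma bg_Pfun_bound (hr : 0 < r) (hulfU : UnifLocFinite U)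
    (hπd : ∀ u : U, dist (u : M) ((π u) : M) < r) {N : ℕ}
    (hN : ∀ x : M, (U ∩ Metric.closedBall x r).Finite ∧
      (U ∩ Metric.closedBall x r).ncard ≤ N)
    (f : lp (fun _ : U => ℝ) ⊤) (t : S) :
    |bgPfun π f t| ≤ (N : ℝ) * ‖f‖ := by
  rw [bg_Pfun_eq π hr hulfU hπd]
  calc |∑ u ∈ (bg_fiber_finite π hr hulfU hπd t).toFinset, f u|
      ≤ ∑ u ∈ (bg_fiber_finite π hr hulfU hπd t).toFinset, |f u| :=
        Finset.abs_sum_le_sum_abs _ _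
    _ ≤ (bg_fiber_finite π hr hulfU hπd t).toFinset.card • ‖f‖ := by
        refine Finset.sum_le_card_nsmul _ _ _ ?_
        intro u _
        have := lp.norm_apply_le_norm ENNReal.top_ne_zero f u
        simpa [Real.norm_eq_abs] using this
    _ ≤ (N : ℝ) * ‖f‖ := by
        rw [nsmul_eq_mul]
        exact mul_le_mul_of_nonneg_right
          (Nat.cast_le.2 (bg_fiber_card_le π hr hulfU hπd hN t)) (norm_nonneg f)

/-- The push-forward as an element of `ℓ^∞(S)`. -/
def bgP (hr : 0 < r) (hulfU : UnifLocFinite U)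
    (hπd : ∀ u : U, dist (u : M) ((π u) : M) < r) (f : lp (fun _ : U => ℝ) ⊤) :
    lp (fun _ : S => ℝ) ⊤ := by
  refine ⟨bgPfun π f, ?_⟩
  apply memℓp_infty
  obtain ⟨N, hN⟩ := hulfU r hr
  refine ⟨(N : ℝ) * ‖f‖, ?_⟩
  rintro x ⟨t, rfl⟩
  simpa [Real.norm_eq_abs] using bg_Pfun_bound π hr hulfU hπd hN f t

lemma bgP_apply (hr : 0 < r) (hulfU : UnifLocFinite U)
    (hπd : ∀ u : U, dist (u : M) ((π u) : M) < r) (f : lp (fun _ : U => ℝ) ⊤) (t : S) :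
    bgP π hr hulfU hπd f t = bgPfun π f t := rfl

end Pi

end Aux

section Transfer

variable {M : Type*} [MetricSpace M] {r : ℝ} {S U : Set M}

lemma bg_extend_transfer (hSU : S ⊆ U)
    {f : lp (fun _ : S => ℝ) ⊤} (hf : f ∈ TransferSet S) :
    extendBdd S U f ∈ TransferSet U := by
  obtain ⟨C, hC, a, hab, ha0, hasum⟩ := hf
  set a' : U → U → ℝ := fun x y =>
    if h : (x : M) ∈ S ∧ (y : M) ∈ S then a ⟨x, h.1⟩ ⟨y, h.2⟩ else 0 with ha'
  have ha'incl : ∀ (z w : S), a' (bgIncl hSU z) (bgIncl hSU w) = a z w := by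
    intro z w
    dsimp only [a', bgIncl]
    rw [dif_pos ⟨z.2, w.2⟩]
  refine ⟨C, hC, a', ?_, ?_, ?_⟩
  · intro x y
    dsimp only [a']
    split_ifs with h
    · exact hab _ _
    · simpa using le_of_lt hC
  · intro x y hxy
    dsimp only [a']
    split_ifs with h
    · exact ha0 _ _ hxy
    · rfl
  · intro x
    by_cases hx : (x : M) ∈ S
    · have hval : (extendBdd S U f) x = f ⟨x, hx⟩ := by
        show extendFun S U f x = _
        simp [extendFun, hx]
      have hxeq : bgIncl hSU ⟨x, hx⟩ = x := Subtype.ext rfl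
      have hsupp : ∀ y : U, (a' x y - a' y x) ≠ 0 → y ∈ Set.range (bgIncl hSU) := by
        intro y hy
        by_contra hyr
        have hyS : (y : M) ∉ S := by
          intro hyS
          refine hyr ⟨⟨(y : M), hyS⟩, ?_⟩
          exact Subtype.ext rfl
        apply hy
        dsimp only [a']
        rw [dif_neg (fun h => hyS h.2), dif_neg (fun h => hyS h.1), sub_zero]
      calc (extendBdd S U f) x = f ⟨x, hx⟩ := hval
        _ = ∑ᶠ z, (a ⟨x, hx⟩ z - a z ⟨x, hx⟩) := hasum _
        _ = ∑ᶠ z, (a' x (bgIncl hSU z) - a' (bgIncl hSU z) x) := by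
            refine finsum_congr fun z => ?_
            have e1 := ha'incl ⟨(x : M), hx⟩ z
            have e2 := ha'incl z ⟨(x : M), hx⟩
            rw [hxeq] at e1 e2
            rw [e1, e2]
        _ = ∑ᶠ y ∈ Set.range (bgIncl hSU), (a' x y - a' y x) :=
            (finsum_mem_range (f := fun y => a' x y - a' y x)
              (bgIncl_injective hSU)).symm
        _ = ∑ᶠ y ∈ (Set.range (bgIncl hSU)) ∩
              Function.support (fun y => a' x y - a' y x), (a' x y - a' y x) :=
            (finsum_mem_inter_support _ _).symm
        _ = ∑ᶠ y ∈ (Set.univ : Set U) ∩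
              Function.support (fun y => a' x y - a' y x), (a' x y - a' y x) := by
            have hseteq : (Set.range (bgIncl hSU)) ∩
                Function.support (fun y => a' x y - a' y x) =
                (Set.univ : Set U) ∩ Function.support (fun y => a' x y - a' y x) := by
              ext y
              simp only [Set.mem_inter_iff, Set.mem_univ, true_and, Function.mem_support]
              exact ⟨fun h => h.2, fun h => ⟨hsupp y h, h⟩⟩
            rw [hseteq]
        _ = ∑ᶠ y ∈ (Set.univ : Set U), (a' x y - a' y x) := finsum_mem_inter_support _ _
        _ = ∑ᶠ y, (a' x y - a' y x) := finsum_mem_univ _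
    · have hval : (extendBdd S U f) x = 0 := by
        show extendFun S U f x = 0
        simp [extendFun, hx]
      have : ∀ y : U, a' x y - a' y x = 0 := by
        intro y
        dsimp only [a']
        rw [dif_neg (fun h => hx h.1), dif_neg (fun h => hx h.2), sub_zero]
      rw [hval, finsum_congr this, finsum_zero]

lemma bg_sub_transfer (hr : 0 < r) (hSU : S ⊆ U) (hulfU : UnifLocFinite U)
    (π : U → S) (hπd : ∀ u : U, dist (u : M) ((π u) : M) < r)
    (hπfix : ∀ (u : U), (u : M) ∈ S → ((π u) : M) = (u : M))
    (f : lp (fun _ : U => ℝ) ⊤) :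
    f - extendBdd S U (bgP π hr hulfU hπd f) ∈ TransferSet U := by
  set a : U → U → ℝ := fun x y =>
    if (x : M) ∉ S ∧ y = bgIncl hSU (π x) then f x else 0 with ha
  have habs : ∀ x y, |a x y| ≤ r + ‖f‖ := by
    intro x y
    dsimp only [a]
    split_ifs with h
    · have h1 := lp.norm_apply_le_norm ENNReal.top_ne_zero f x
      rw [Real.norm_eq_abs] at h1
      linarith
    · rw [abs_zero]
      positivity
  refine ⟨r + ‖f‖, by positivity, a, habs, ?_, ?_⟩
  · intro x y hxy
    dsimp only [a]
    split_ifs with h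
    · exfalso
      have h2 : (y : M) = ((π x) : M) := congrArg (fun u : U => (u : M)) h.2
      have h3 := hπd x
      rw [← h2] at h3
      have h4 := norm_nonneg f
      linarith
    · rfl
  · intro x
    have hLHS : (f - extendBdd S U (bgP π hr hulfU hπd f)) x
        = f x - extendFun S U (bgP π hr hulfU hπd f) x := bg_lp_sub_apply _ _ _
    by_cases hx : (x : M) ∈ S
    · set t : S := ⟨x, hx⟩ with ht
      have hxeq : bgIncl hSU t = x := Subtype.ext rfl
      set F := (bg_fiber_finite π hr hulfU hπd t).toFinset with hF
      have hmemF : ∀ {y : U}, y ∈ F ↔ π y = t := fun {y} => Set.Finite.mem_toFinset _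
      have hιt : bgIncl hSU t ∈ F := by
        refine hmemF.2 (Subtype.ext ?_)
        exact hπfix (bgIncl hSU t) hx
      have hax : ∀ y, a x y = 0 := by
        intro y
        dsimp only [a]
        rw [if_neg (fun h => h.1 hx)]
      have hsupp : Function.support (fun y => a y x) ⊆ (F : Set U) := by
        intro y hy
        rw [Function.mem_support] at hy
        dsimp only [a] at hy
        by_cases hc : (y : M) ∉ S ∧ x = bgIncl hSU (π y)
        · refine hmemF.2 (Subtype.ext ?_)
          have h2 : (x : M) = ((π y) : M) := congrArg (fun u : U => (u : M)) hc.2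
          exact h2.symm
        · rw [if_neg hc] at hy
          exact absurd rfl hy
      have hval : ∀ y ∈ F, a y x
          = f y - (if y = bgIncl hSU t then f (bgIncl hSU t) else 0) := by
        intro y hyF
        dsimp only [a]
        by_cases hyS : (y : M) ∈ S
        · have hyt : y = bgIncl hSU t := by
            apply Subtype.ext
            have h1 := hπfix y hyS
            have h2 : π y = t := hmemF.1 hyF
            rw [h2] at h1
            exact h1.symm
          rw [if_neg (fun h => h.1 hyS), if_pos hyt, hyt, sub_self]
        · have hyt : y ≠ bgIncl hSU t := by
            intro h
            apply hyS
            rw [h]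
            exact hx
          have hcond : x = bgIncl hSU (π y) := by
            rw [hmemF.1 hyF, hxeq]
          rw [if_pos ⟨hyS, hcond⟩, if_neg hyt, sub_zero]
      have hExt : extendFun S U (bgP π hr hulfU hπd f) x = ∑ y ∈ F, f y := by
        rw [extendFun]
        rw [dif_pos hx]
        show bgPfun π f t = _
        exact bg_Pfun_eq π hr hulfU hπd f t
      rw [hLHS, hExt]
      calc f x - ∑ y ∈ F, f y
          = -((∑ y ∈ F, f y) - f (bgIncl hSU t)) := by rw [hxeq]; ring
        _ = -(∑ y ∈ F, (f y - if y = bgIncl hSU t then f (bgIncl hSU t) else 0)) := by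
            rw [Finset.sum_sub_distrib, Finset.sum_ite_eq' F (bgIncl hSU t)
              (fun _ => f (bgIncl hSU t)), if_pos hιt]
        _ = -(∑ y ∈ F, a y x) := by
            congr 1
            exact (Finset.sum_congr rfl hval).symm
        _ = -(∑ᶠ y, a y x) := by
            rw [finsum_eq_finset_sum_of_support_subset _ hsupp]
        _ = ∑ᶠ y, -(a y x) := (finsum_neg_distrib _).symm
        _ = ∑ᶠ y, (a x y - a y x) := by
            refine finsum_congr fun y => ?_
            rw [hax, zero_sub]
    · have hExt : extendFun S U (bgP π hr hulfU hπd f) x = 0 := by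
        rw [extendFun, dif_neg hx]
      have hayx : ∀ y, a y x = 0 := by
        intro y
        dsimp only [a]
        rw [if_neg]
        rintro ⟨-, h2⟩
        apply hx
        have h3 : (x : M) = ((π y) : M) := congrArg (fun u : U => (u : M)) h2
        rw [h3]
        exact (π y).2
      rw [hLHS, hExt, sub_zero]
      have : ∀ y, a x y - a y x = a x y := fun y => by rw [hayx, sub_zero]
      rw [finsum_congr this]
      rw [finsum_eq_single _ (bgIncl hSU (π x)) ?_]
      · dsimp only [a]
        rw [if_pos ⟨hx, rfl⟩]
      · intro y hy
        dsimp only [a]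
        rw [if_neg (fun h => hy h.2)]

end Transfer

section Regroup

variable {M : Type*} [MetricSpace M] {r : ℝ} {S U : Set M}

lemma bg_P_transfer (hr : 0 < r) (hulfU : UnifLocFinite U)
    (π : U → S) (hπd : ∀ u : U, dist (u : M) ((π u) : M) < r)
    {f : lp (fun _ : U => ℝ) ⊤} (hf : f ∈ TransferSet U) :
    bgP π hr hulfU hπd f ∈ TransferSet S := by
  obtain ⟨C, hC, a, hab, ha0, hasum⟩ := hf
  obtain ⟨N, hN⟩ := hulfU r hr
  set Fib : S → Finset U := fun t => (bg_fiber_finite π hr hulfU hπd t).toFinset with hFib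
  have hmemFib : ∀ {u : U} {t : S}, u ∈ Fib t ↔ π u = t := fun {u t} =>
    Set.Finite.mem_toFinset _
  have hFibdist : ∀ {u : U} {t : S}, u ∈ Fib t → dist (u : M) (t : M) < r := by
    intro u t hu
    have h1 : π u = t := hmemFib.1 hu
    have h2 := hπd u
    rwa [h1] at h2
  have hFibcard : ∀ t : S, (Fib t).card ≤ N := fun t =>
    bg_fiber_card_le π hr hulfU hπd hN t
  set b : S → S → ℝ := fun t s => ∑ x ∈ Fib t, ∑ y ∈ Fib s, a x y with hb
  have hCpos : (0 : ℝ) < (N : ℝ) * (N : ℝ) * C + (C + 2 * r) := by positivity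
  refine ⟨(N : ℝ) * (N : ℝ) * C + (C + 2 * r), hCpos, b, ?_, ?_, ?_⟩
  · -- bound
    intro t s
    have h1 : |b t s| ≤ (N : ℝ) * ((N : ℝ) * C) := by
      calc |b t s| ≤ ∑ x ∈ Fib t, |∑ y ∈ Fib s, a x y| := Finset.abs_sum_le_sum_abs _ _
        _ ≤ (Fib t).card • ((N : ℝ) * C) := by
            refine Finset.sum_le_card_nsmul _ _ _ ?_
            intro x _
            calc |∑ y ∈ Fib s, a x y| ≤ ∑ y ∈ Fib s, |a x y| :=
                  Finset.abs_sum_le_sum_abs _ _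
              _ ≤ (Fib s).card • C := Finset.sum_le_card_nsmul _ _ _ fun y _ => hab x y
              _ ≤ (N : ℝ) * C := by
                  rw [nsmul_eq_mul]
                  exact mul_le_mul_of_nonneg_right (Nat.cast_le.2 (hFibcard s)) hC.le
        _ ≤ (N : ℝ) * ((N : ℝ) * C) := by
            rw [nsmul_eq_mul]
            exact mul_le_mul_of_nonneg_right (Nat.cast_le.2 (hFibcard t))
              (by positivity)
    have h2 : (0 : ℝ) ≤ C + 2 * r := by positivity
    calc |b t s| ≤ (N : ℝ) * ((N : ℝ) * C) := h1
      _ ≤ (N : ℝ) * (N : ℝ) * C + (C + 2 * r) := by rw [← mul_assoc]; linarith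
  · -- vanishing
    intro t s hts
    refine Finset.sum_eq_zero fun x hx => Finset.sum_eq_zero fun y hy => ?_
    refine ha0 x y ?_
    have h1 := hFibdist hx
    have h2 := hFibdist hy
    have h3 := dist_triangle4 (t : M) (x : M) (y : M) (s : M)
    have h4 : (0 : ℝ) ≤ (N : ℝ) * (N : ℝ) * C := by positivity
    have h5 : dist (t : M) (x : M) < r := by rw [dist_comm]; exact h1
    linarith
  · -- main identity
    intro t
    have hCr : (0 : ℝ) < C + r := by positivity
    set Y : Finset U := (bg_ulf_finite hulfU hCr (t : M)).toFinset with hY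
    have hmemY : ∀ {y : U}, y ∈ Y ↔ dist (y : M) (t : M) ≤ C + r := fun {y} =>
      Set.Finite.mem_toFinset _
    set A : Finset S := Y.image π with hA
    -- generic regrouping
    have hgen : ∀ w ∈ Fib t, ∀ c : U → ℝ, (∀ v : U, C < dist (w : M) (v : M) → c v = 0) →
        ∑ s ∈ A, ∑ v ∈ Fib s, c v = ∑ v ∈ Y, c v := by
      intro w hw c hc
      have hdisj : Set.PairwiseDisjoint (A : Set S) Fib := by
        intro s1 _ s2 _ hne
        refine Finset.disjoint_left.2 fun v hv1 hv2 => ?_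
        exact hne ((hmemFib.1 hv1).symm.trans (hmemFib.1 hv2))
      rw [← Finset.sum_biUnion hdisj]
      refine (Finset.sum_subset ?_ ?_).symm
      · intro v hv
        refine Finset.mem_biUnion.2 ⟨π v, Finset.mem_image.2 ⟨v, hv, rfl⟩, hmemFib.2 rfl⟩
      · intro v _ hvY
        refine hc v ?_
        have h1 : ¬ dist (v : M) (t : M) ≤ C + r := fun h => hvY (hmemY.2 h)
        push_neg at h1
        have h2 : dist (w : M) (t : M) < r := hFibdist hw
        have h3 := dist_triangle (v : M) (w : M) (t : M)
        have h4 := dist_triangle (v : M) (t : M) (w : M)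
        rw [dist_comm (w : M) (v : M)]
        have h5 : dist (t : M) (w : M) < r := by rw [dist_comm]; exact h2
        linarith
    have hsupp : Function.support (fun s => b t s - b s t) ⊆ (A : Set S) := by
      intro s hs
      rw [Function.mem_support] at hs
      have hkey : (∃ x ∈ Fib t, ∃ y ∈ Fib s, a x y ≠ 0) ∨
          (∃ x ∈ Fib s, ∃ y ∈ Fib t, a x y ≠ 0) := by
        by_contra hcon
        push_neg at hcon
        apply hs
        have e1 : b t s = 0 := Finset.sum_eq_zero fun x hx =>
          Finset.sum_eq_zero fun y hy => hcon.1 x hx y hy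
        have e2 : b s t = 0 := Finset.sum_eq_zero fun x hx =>
          Finset.sum_eq_zero fun y hy => hcon.2 x hx y hy
        rw [e1, e2, sub_zero]
      rcases hkey with ⟨x, hx, y, hy, haxy⟩ | ⟨x, hx, y, hy, haxy⟩
      · have hdxy : dist (x : M) (y : M) ≤ C := by
          by_contra h
          push_neg at h
          exact haxy (ha0 x y h)
        have h1 : dist (x : M) (t : M) < r := hFibdist hx
        have h2 : dist (y : M) (t : M) ≤ C + r := by
          have := dist_triangle (y : M) (x : M) (t : M)
          rw [dist_comm (y : M) (x : M)] at this
          linarith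
        exact Finset.mem_image.2 ⟨y, hmemY.2 h2, hmemFib.1 hy⟩
      · have hdxy : dist (x : M) (y : M) ≤ C := by
          by_contra h
          push_neg at h
          exact haxy (ha0 x y h)
        have h1 : dist (y : M) (t : M) < r := hFibdist hy
        have h2 : dist (x : M) (t : M) ≤ C + r := by
          have := dist_triangle (x : M) (y : M) (t : M)
          linarith
        exact Finset.mem_image.2 ⟨x, hmemY.2 h2, hmemFib.1 hx⟩
    have hstep2 : ∀ x ∈ Fib t, f x = ∑ y ∈ Y, (a x y - a y x) := by
      intro x hx
      rw [hasum x]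
      refine finsum_eq_finset_sum_of_support_subset _ ?_
      intro y hy
      rw [Function.mem_support] at hy
      have hxy : dist (x : M) (y : M) ≤ C := by
        by_contra h
        push_neg at h
        apply hy
        rw [ha0 x y h, ha0 y x (by rwa [dist_comm]), sub_zero]
      have h1 : dist (x : M) (t : M) < r := hFibdist hx
      have h2 : dist (y : M) (t : M) ≤ C + r := by
        have := dist_triangle (y : M) (x : M) (t : M)
        rw [dist_comm (y : M) (x : M)] at this
        linarith
      exact hmemY.2 h2
    show bgPfun π f t = _
    rw [bg_Pfun_eq π hr hulfU hπd f t]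
    rw [(finsum_eq_finset_sum_of_support_subset _ hsupp :
      ∑ᶠ s, (b t s - b s t) = ∑ s ∈ A, (b t s - b s t))]
    rw [Finset.sum_sub_distrib]
    have e1 : ∑ s ∈ A, b t s = ∑ x ∈ Fib t, ∑ y ∈ Y, a x y := by
      rw [Finset.sum_comm]
      refine Finset.sum_congr rfl fun x hx => ?_
      exact hgen x hx (fun y => a x y) (fun v hv => ha0 x v hv)
    have e2 : ∑ s ∈ A, b s t = ∑ x ∈ Fib t, ∑ y ∈ Y, a y x := by
      have e3 : ∀ s : S, b s t = ∑ y ∈ Fib t, ∑ x ∈ Fib s, a x y :=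
        fun s => Finset.sum_comm
      calc ∑ s ∈ A, b s t = ∑ s ∈ A, ∑ y ∈ Fib t, ∑ x ∈ Fib s, a x y :=
            Finset.sum_congr rfl fun s _ => e3 s
        _ = ∑ y ∈ Fib t, ∑ s ∈ A, ∑ x ∈ Fib s, a x y := Finset.sum_comm
        _ = ∑ y ∈ Fib t, ∑ x ∈ Y, a x y := by
            refine Finset.sum_congr rfl fun y hy => ?_
            refine hgen y hy (fun v => a v y) (fun v hv => ?_)
            exact ha0 v y (by rwa [dist_comm])
    rw [e1, e2, ← Finset.sum_sub_distrib]
    refine Finset.sum_congr rfl fun x hx => ?_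
    rw [← Finset.sum_sub_distrib]
    exact hstep2 x hx

end Regroup

section KeyLemma

variable {M : Type*} [MetricSpace M] {r : ℝ} {S U : Set M}

/-- Extension by zero as a continuous linear map. -/
def bgExtendCLM (S U : Set M) : lp (fun _ : S => ℝ) ⊤ →L[ℝ] lp (fun _ : U => ℝ) ⊤ :=
  LinearMap.mkContinuous
    { toFun := extendBdd S U
      map_add' := by
        intro f g
        apply lp.ext
        funext x
        rw [bg_lp_add_apply]
        show extendFun S U (f + g) x = extendFun S U f x + extendFun S U g x
        rw [extendFun, extendFun, extendFun]
        split_ifs with h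
        · exact bg_lp_add_apply f g ⟨x, h⟩
        · rw [add_zero]
      map_smul' := by
        intro c f
        apply lp.ext
        funext x
        rw [RingHom.id_apply, bg_lp_smul_apply]
        show extendFun S U (c • f) x = c * extendFun S U f x
        rw [extendFun, extendFun]
        split_ifs with h
        · exact bg_lp_smul_apply c f ⟨x, h⟩
        · rw [mul_zero] }
    1
    (by
      intro f
      rw [one_mul]
      apply lp.norm_le_of_forall_le (norm_nonneg f)
      intro i
      show ‖extendFun S U f i‖ ≤ ‖f‖
      rw [extendFun]
      split_ifs with h
      · exact lp.norm_apply_le_norm ENNReal.top_ne_zero f ⟨i, h⟩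
      · rw [norm_zero]; exact norm_nonneg f)

lemma bgExtendCLM_apply (S U : Set M) (f : lp (fun _ : S => ℝ) ⊤) :
    bgExtendCLM S U f = extendBdd S U f := rfl

/-- The push-forward as a continuous linear map. -/
def bgPCLM (hr : 0 < r) (hulfU : UnifLocFinite U) (π : U → S)
    (hπd : ∀ u : U, dist (u : M) ((π u) : M) < r) :
    lp (fun _ : U => ℝ) ⊤ →L[ℝ] lp (fun _ : S => ℝ) ⊤ :=
  LinearMap.mkContinuousOfExistsBound
    { toFun := bgP π hr hulfU hπd
      map_add' := by
        intro f g
        apply lp.ext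
        funext t
        rw [bg_lp_add_apply]
        show bgPfun π (f + g) t = bgPfun π f t + bgPfun π g t
        rw [bg_Pfun_eq π hr hulfU hπd, bg_Pfun_eq π hr hulfU hπd,
          bg_Pfun_eq π hr hulfU hπd, ← Finset.sum_add_distrib]
        exact Finset.sum_congr rfl fun u _ => bg_lp_add_apply f g u
      map_smul' := by
        intro c f
        apply lp.ext
        funext t
        rw [RingHom.id_apply, bg_lp_smul_apply]
        show bgPfun π (c • f) t = c * bgPfun π f t
        rw [bg_Pfun_eq π hr hulfU hπd, bg_Pfun_eq π hr hulfU hπd, Finset.mul_sum]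
        exact Finset.sum_congr rfl fun u _ => bg_lp_smul_apply c f u }
    (by
      obtain ⟨N, hN⟩ := hulfU r hr
      refine ⟨(N : ℝ), fun f => ?_⟩
      have hnn : (0 : ℝ) ≤ (N : ℝ) * ‖f‖ := by positivity
      apply lp.norm_le_of_forall_le hnn
      intro t
      show ‖bgPfun π f t‖ ≤ (N : ℝ) * ‖f‖
      rw [Real.norm_eq_abs]
      exact bg_Pfun_bound π hr hulfU hπd hN f t)

lemma bgPCLM_apply (hr : 0 < r) (hulfU : UnifLocFinite U) (π : U → S)
    (hπd : ∀ u : U, dist (u : M) ((π u) : M) < r) (f : lp (fun _ : U => ℝ) ⊤) :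
    bgPCLM hr hulfU π hπd f = bgP π hr hulfU hπd f := rfl

lemma bg_PE (hr : 0 < r) (hSU : S ⊆ U) (hulfU : UnifLocFinite U) (π : U → S)
    (hπd : ∀ u : U, dist (u : M) ((π u) : M) < r)
    (hπfix : ∀ u : U, (u : M) ∈ S → ((π u) : M) = (u : M))
    (g : lp (fun _ : S => ℝ) ⊤) :
    bgP π hr hulfU hπd (extendBdd S U g) = g := by
  apply lp.ext
  funext t
  show bgPfun π (extendBdd S U g) t = g t
  rw [bg_Pfun_eq π hr hulfU hπd]
  set F := (bg_fiber_finite π hr hulfU hπd t).toFinset with hF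
  have hmemF : ∀ {y : U}, y ∈ F ↔ π y = t := fun {y} => Set.Finite.mem_toFinset _
  have hιt : bgIncl hSU t ∈ F := by
    refine hmemF.2 (Subtype.ext ?_)
    exact hπfix (bgIncl hSU t) t.2
  rw [Finset.sum_eq_single (bgIncl hSU t)]
  · show extendFun S U g (bgIncl hSU t) = g t
    have ht : ((bgIncl hSU t : U) : M) ∈ S := t.2
    rw [extendFun]
    exact dif_pos ht
  · intro y hyF hyne
    show extendFun S U g y = 0
    rw [extendFun]
    split_ifs with h
    · exfalso
      apply hyne
      apply Subtype.ext
      have h1 := hπfix y h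
      have h2 : π y = t := hmemF.1 hyF
      rw [h2] at h1
      exact h1.symm
    · rfl
  · intro h
    exact absurd hιt h

lemma bg_key (hr : 0 < r) (hSU : S ⊆ U)
    (hcov : ∀ u : M, u ∈ U → ∃ s ∈ S, dist u s < r) (hulfU : UnifLocFinite U) :
    (∀ f ∈ TransferClosure S, extendBdd S U f ∈ TransferClosure U) ∧
    ∃ e : (lp (fun _ : S => ℝ) ⊤ ⧸ TransferClosure S) ≃ₗ[ℝ]
        (lp (fun _ : U => ℝ) ⊤ ⧸ TransferClosure U),
      ∀ f : lp (fun _ : S => ℝ) ⊤,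
        e (Submodule.Quotient.mk f) = Submodule.Quotient.mk (extendBdd S U f) := by
  have hπex : ∃ π : U → S, (∀ u : U, dist (u : M) ((π u) : M) < r) ∧
      (∀ u : U, (u : M) ∈ S → ((π u) : M) = (u : M)) := by
    refine ⟨fun u => if h : (u : M) ∈ S then ⟨u, h⟩ else
      ⟨(hcov u u.2).choose, (hcov u u.2).choose_spec.1⟩, fun u => ?_, fun u hu => ?_⟩
    · dsimp only
      split_ifs with h
      · simpa using hr
      · exact (hcov u u.2).choose_spec.2
    · dsimp only
      rw [dif_pos hu]
  obtain ⟨π, hπd, hπfix⟩ := hπex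
  set E := bgExtendCLM S U with hE
  set P := bgPCLM hr hulfU π hπd with hP
  have hEmem : ∀ f ∈ TransferClosure S, E f ∈ TransferClosure U := by
    intro f hf
    have h1 : TransferSub S ≤ (TransferClosure U).comap (E : lp (fun _ : S => ℝ) ⊤ →ₗ[ℝ] lp (fun _ : U => ℝ) ⊤) := by
      rw [TransferSub, Submodule.span_le]
      intro g hg
      simp only [SetLike.mem_coe, Submodule.mem_comap]
      exact Submodule.le_topologicalClosure _
        (Submodule.subset_span (bg_extend_transfer hSU hg))
    have h3 : IsClosed ((TransferClosure U).comap
        (E : lp (fun _ : S => ℝ) ⊤ →ₗ[ℝ] lp (fun _ : U => ℝ) ⊤) : Set (lp (fun _ : S => ℝ) ⊤)) :=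
      (Submodule.isClosed_topologicalClosure (TransferSub U)).preimage E.continuous
    exact Submodule.topologicalClosure_minimal _ h1 h3 hf
  have hPmem : ∀ f ∈ TransferClosure U, P f ∈ TransferClosure S := by
    intro f hf
    have h1 : TransferSub U ≤ (TransferClosure S).comap (P : lp (fun _ : U => ℝ) ⊤ →ₗ[ℝ] lp (fun _ : S => ℝ) ⊤) := by
      rw [TransferSub, Submodule.span_le]
      intro g hg
      simp only [SetLike.mem_coe, Submodule.mem_comap]
      exact Submodule.le_topologicalClosure _
        (Submodule.subset_span (bg_P_transfer hr hulfU π hπd hg))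
    have h3 : IsClosed ((TransferClosure S).comap
        (P : lp (fun _ : U => ℝ) ⊤ →ₗ[ℝ] lp (fun _ : S => ℝ) ⊤) : Set (lp (fun _ : U => ℝ) ⊤)) :=
      (Submodule.isClosed_topologicalClosure (TransferSub S)).preimage P.continuous
    exact Submodule.topologicalClosure_minimal _ h1 h3 hf
  have hsub : ∀ g : lp (fun _ : U => ℝ) ⊤, g - E (P g) ∈ TransferClosure U := by
    intro g
    exact Submodule.le_topologicalClosure _
      (Submodule.subset_span (bg_sub_transfer hr hSU hulfU π hπd hπfix g))
  have hPE : ∀ g : lp (fun _ : S => ℝ) ⊤, P (E g) = g := fun g =>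
    bg_PE hr hSU hulfU π hπd hπfix g
  have hker1 : TransferClosure S ≤ LinearMap.ker
      ((TransferClosure U).mkQ.comp (E : lp (fun _ : S => ℝ) ⊤ →ₗ[ℝ] lp (fun _ : U => ℝ) ⊤)) := by
    intro f hf
    rw [LinearMap.mem_ker, LinearMap.comp_apply, Submodule.mkQ_apply,
      Submodule.Quotient.mk_eq_zero]
    exact hEmem f hf
  have hker2 : TransferClosure U ≤ LinearMap.ker
      ((TransferClosure S).mkQ.comp (P : lp (fun _ : U => ℝ) ⊤ →ₗ[ℝ] lp (fun _ : S => ℝ) ⊤)) := by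
    intro f hf
    rw [LinearMap.mem_ker, LinearMap.comp_apply, Submodule.mkQ_apply,
      Submodule.Quotient.mk_eq_zero]
    exact hPmem f hf
  set Ebar := (TransferClosure S).liftQ
    ((TransferClosure U).mkQ.comp (E : lp (fun _ : S => ℝ) ⊤ →ₗ[ℝ] lp (fun _ : U => ℝ) ⊤)) hker1 with hEbar
  set Pbar := (TransferClosure U).liftQ
    ((TransferClosure S).mkQ.comp (P : lp (fun _ : U => ℝ) ⊤ →ₗ[ℝ] lp (fun _ : S => ℝ) ⊤)) hker2 with hPbar
  have h1 : Ebar.comp Pbar = LinearMap.id := by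
    apply Submodule.linearMap_qext
    refine LinearMap.ext fun g => ?_
    simp only [LinearMap.comp_apply, Submodule.mkQ_apply, hEbar, hPbar,
      Submodule.liftQ_apply, LinearMap.id_apply]
    rw [Submodule.Quotient.eq]
    have := Submodule.neg_mem _ (hsub g)
    rwa [neg_sub] at this
  have h2 : Pbar.comp Ebar = LinearMap.id := by
    apply Submodule.linearMap_qext
    refine LinearMap.ext fun g => ?_
    simp only [LinearMap.comp_apply, Submodule.mkQ_apply, hEbar, hPbar,
      Submodule.liftQ_apply, LinearMap.id_apply]
    exact congrArg Submodule.Quotient.mk (hPE g)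
  refine ⟨hEmem, ⟨LinearEquiv.ofLinear Ebar Pbar h1 h2, fun f => ?_⟩⟩
  show Ebar (Submodule.Quotient.mk f) = Submodule.Quotient.mk (extendBdd S U f)
  rw [hEbar]
  exact Submodule.liftQ_apply _ _ f

end KeyLemma


/-- **Independence of the bounded-geometry cohomology `H⁰_b(M/TM)` of the lattice.**
If `T₁` is an `r₁`-lattice and `T₂` an `r₂`-lattice of a metric space `M`, with `T₁`,
`T₂` and `T = T₁ ∪ T₂` uniformly locally finite, then extension by zero maps `V̄(T₁)`
into `V̄(T)` and induces a linear isomorphism `ℬ(T₁)/V̄(T₁) ≅ ℬ(T)/V̄(T)`; by symmetry,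
`ℬ(T₁)/V̄(T₁) ≅ ℬ(T₂)/V̄(T₂)`. -/
theorem bg_cohomology_independent_of_lattice (r₁ r₂ : ℝ) (hr₁ : 0 < r₁) (hr₂ : 0 < r₂)
    (T₁ T₂ : Set M)
    (hsep₁ : ∀ x ∈ T₁, ∀ y ∈ T₁, x ≠ y → r₁ ≤ dist x y)
    (hcov₁ : ∀ x : M, ∃ t ∈ T₁, dist x t < r₁)
    (hsep₂ : ∀ x ∈ T₂, ∀ y ∈ T₂, x ≠ y → r₂ ≤ dist x y)
    (hcov₂ : ∀ x : M, ∃ t ∈ T₂, dist x t < r₂)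
    (hulf₁ : UnifLocFinite T₁) (hulf₂ : UnifLocFinite T₂)
    (hulf : UnifLocFinite (T₁ ∪ T₂)) :
    (∀ f ∈ TransferClosure T₁, extendBdd T₁ (T₁ ∪ T₂) f ∈ TransferClosure (T₁ ∪ T₂)) ∧
    (∃ e : (lp (fun _ : T₁ => ℝ) ⊤ ⧸ TransferClosure T₁) ≃ₗ[ℝ]
        (lp (fun _ : (T₁ ∪ T₂ : Set M) => ℝ) ⊤ ⧸ TransferClosure (T₁ ∪ T₂)),
      ∀ f : lp (fun _ : T₁ => ℝ) ⊤,
        e (Submodule.Quotient.mk f) =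
          Submodule.Quotient.mk (extendBdd T₁ (T₁ ∪ T₂) f)) ∧
    Nonempty ((lp (fun _ : T₁ => ℝ) ⊤ ⧸ TransferClosure T₁) ≃ₗ[ℝ]
        (lp (fun _ : T₂ => ℝ) ⊤ ⧸ TransferClosure T₂)) := by
  obtain ⟨h1, e1, he1⟩ := bg_key hr₁ Set.subset_union_left
    (fun u _ => hcov₁ u) hulf
  obtain ⟨-, e2, -⟩ := bg_key hr₂ Set.subset_union_right
    (fun u _ => hcov₂ u) hulf
  exact ⟨h1, ⟨e1, he1⟩, ⟨e1.trans e2.symm⟩⟩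
end
end

section
/- Let (M, d) be a metric space with a Borel measure μ such that for every t > 0 there is V_t < ∞ with μ(B(x, t)) ≤ V_t for all x ∈ M. Let r > 0, let T ⊆ M be a uniformly locally finite r-lattice, and let (φ_x)_{x∈T} be a measurable partition of unity subordinate to the balls {B(x, r)}_{x∈T}: each φ_x : M → [0,1] is measurable, φ_x vanishes outside B(x, r), and Σ_{x∈T} φ_x(u) = 1 for every u ∈ M. Let m ∈ ℕ and let k₁, k₂ : M × M → Mat_{m×m}(ℝ) be measurable kernels with uniformly bounded entries, with k₂(x, y) = 0 whenever d(x, y) ≥ s for some s > 0. Define (k₁ ∘ k₂)(x, y) = ∫_M k₁(x, z)·k₂(z, y) dμ(z) and similarly k₂ ∘ k₁. Then the function T → ℝ given by x ↦ ∫_M φ_x(u) · tr( (k₁ ∘ k₂)(u, u) − (k₂ ∘ k₁)(u, u) ) dμ(u) is bounded and lies in the sup-norm closure V̄(T) of the transfer subspace V(T); that is, tr_b(k₁ ∘ k₂) = tr_b(k₂ ∘ k₁) in the bounded-geometry cohomology ℬ(T)/V̄(T). -/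
open Metric MeasureTheory
open scoped ENNReal

noncomputable section

set_option synthInstance.maxHeartbeats 400000
set_option maxHeartbeats 800000

variable {M : Type*} [MetricSpace M]

namespace BGTraceAux

/-- A measurable function that is bounded and supported in a set of finite measure is
integrable. -/
theorem aux_integrable {α : Type*} [MeasurableSpace α] {ν : Measure α} {h : α → ℝ}
    (hm : AEStronglyMeasurable h ν) {B : ℝ}
    (hb : ∀ z, |h z| ≤ B) {A : Set α} (hA : MeasurableSet A) (hAfin : ν A ≠ ⊤)
    (h0 : ∀ z ∉ A, h z = 0) : Integrable h ν := by
  have heq : h = A.indicator h := by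
    funext z
    by_cases hz : z ∈ A
    · simp [Set.indicator_of_mem hz]
    · simp [Set.indicator_of_notMem hz, h0 z hz]
  rw [heq]
  exact (integrable_indicator_iff hA).2 <|
    ν.integrableOn_of_bounded hAfin hm (ae_of_all _ fun z => by
      rw [Real.norm_eq_abs]; exact hb z)

/-- Basic estimate for the integral of a bounded function supported in a set of finite
measure. -/
theorem aux_abs_integral_le {α : Type*} [MeasurableSpace α] {ν : Measure α} {h : α → ℝ}
    (hm : AEStronglyMeasurable h ν) {B : ℝ}
    (hb : ∀ z, |h z| ≤ B) {A : Set α} (hA : MeasurableSet A) (hAfin : ν A ≠ ⊤)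
    (h0 : ∀ z ∉ A, h z = 0) : |∫ z, h z ∂ν| ≤ B * (ν A).toReal := by
  have hint : Integrable h ν := aux_integrable hm hb hA hAfin h0
  have hind : Integrable (A.indicator fun _ => B) ν :=
    (integrable_indicator_iff hA).2 (integrableOn_const hAfin)
  have hpt : ∀ z, |h z| ≤ A.indicator (fun _ => B) z := by
    intro z
    by_cases hz : z ∈ A
    · simpa [Set.indicator_of_mem hz] using hb z
    · simp [Set.indicator_of_notMem hz, h0 z hz]
  calc |∫ z, h z ∂ν| = ‖∫ z, h z ∂ν‖ := (Real.norm_eq_abs _).symm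
    _ ≤ ∫ z, ‖h z‖ ∂ν := norm_integral_le_integral_norm _
    _ = ∫ z, |h z| ∂ν := by simp [Real.norm_eq_abs]
    _ ≤ ∫ z, A.indicator (fun _ => B) z ∂ν := integral_mono hint.abs hind hpt
    _ = B * (ν A).toReal := by
      rw [integral_indicator hA, setIntegral_const, smul_eq_mul, mul_comm]; rfl

/-- The core of the trace theorem, for a scalar kernel `g` (which will be
`g u z = tr(k₁(u,z)·k₂(z,u))`): the function `x ↦ ∫ φ_x(u)·(∫ g(u,z)dz − ∫ g(z,u)dz)du`
is a transfer function, hence lies in `V̄(T)`. -/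
theorem core {M : Type*} [MetricSpace M] [MeasurableSpace M] [BorelSpace M] [Nonempty M]
    (μ : Measure M)
    (hvol : ∀ t : ℝ, 0 < t → ∃ Vt : ℝ, ∀ x : M, μ (ball x t) ≤ ENNReal.ofReal Vt)
    (r : ℝ) (hr : 0 < r) (T : Set M)
    (hulf : UnifLocFinite T)
    (φ : T → M → ℝ)
    (hφmeas : ∀ x : T, Measurable (φ x))
    (hφ01 : ∀ (x : T) (u : M), φ x u ∈ Set.Icc (0 : ℝ) 1)
    (hφsupp : ∀ (x : T) (u : M), u ∉ ball (x : M) r → φ x u = 0)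
    (hφsum : ∀ u : M, ∑ᶠ x : T, φ x u = 1)
    (s : ℝ) (hs : 0 < s)
    (g : M → M → ℝ) (hgmeas : Measurable (Function.uncurry g))
    (B : ℝ) (hB : 0 ≤ B) (hgB : ∀ u z, |g u z| ≤ B)
    (hgprop : ∀ u z, s ≤ dist u z → g u z = 0) :
    ∃ hF : Memℓp (fun x : T =>
        ∫ u, φ x u * ((∫ z, g u z ∂μ) - ∫ z, g z u ∂μ) ∂μ) (⊤ : ℝ≥0∞),
      (⟨fun x : T =>
        ∫ u, φ x u * ((∫ z, g u z ∂μ) - ∫ z, g z u ∂μ) ∂μ, hF⟩ :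
        lp (fun _ : T => ℝ) ⊤) ∈ TransferClosure T := by
  -- σ-finiteness
  haveI : SigmaFinite μ := by
    obtain ⟨x₀⟩ := ‹Nonempty M›
    refine ⟨⟨⟨fun n => ball x₀ (n + 1), fun _ => trivial, fun n => ?_, ?_⟩⟩⟩
    · obtain ⟨V, hV⟩ := hvol (n + 1) (by positivity)
      exact lt_of_le_of_lt (hV x₀) ENNReal.ofReal_lt_top
    · ext y
      simp only [Set.mem_iUnion, Set.mem_univ, iff_true, mem_ball]
      obtain ⟨n, hn⟩ := exists_nat_gt (dist y x₀)
      exact ⟨n, hn.trans_le (by norm_num)⟩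
  obtain ⟨Vr₀, hVr₀⟩ := hvol r hr
  obtain ⟨Vs₀, hVs₀⟩ := hvol s hs
  set Vr : ℝ := max Vr₀ 0 with hVrdef
  set Vs : ℝ := max Vs₀ 0 with hVsdef
  have hVrnn : 0 ≤ Vr := le_max_right _ _
  have hVsnn : 0 ≤ Vs := le_max_right _ _
  have hμr : ∀ x : M, μ (ball x r) ≠ ⊤ :=
    fun x => ((hVr₀ x).trans_lt ENNReal.ofReal_lt_top).ne
  have hμs : ∀ x : M, μ (ball x s) ≠ ⊤ :=
    fun x => ((hVs₀ x).trans_lt ENNReal.ofReal_lt_top).ne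
  have hVr : ∀ x : M, (μ (ball x r)).toReal ≤ Vr := by
    intro x
    have h1 : μ (ball x r) ≤ ENNReal.ofReal Vr :=
      (hVr₀ x).trans (ENNReal.ofReal_le_ofReal (le_max_left _ _))
    calc (μ (ball x r)).toReal ≤ (ENNReal.ofReal Vr).toReal :=
          ENNReal.toReal_mono ENNReal.ofReal_ne_top h1
      _ = Vr := ENNReal.toReal_ofReal hVrnn
  have hVs : ∀ x : M, (μ (ball x s)).toReal ≤ Vs := by
    intro x
    have h1 : μ (ball x s) ≤ ENNReal.ofReal Vs :=
      (hVs₀ x).trans (ENNReal.ofReal_le_ofReal (le_max_left _ _))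
    calc (μ (ball x s)).toReal ≤ (ENNReal.ofReal Vs).toReal :=
          ENNReal.toReal_mono ENNReal.ofReal_ne_top h1
      _ = Vs := ENNReal.toReal_ofReal hVsnn
  -- basic measurability
  have hgu : ∀ u : M, Measurable (g u) := fun u => hgmeas.comp measurable_prodMk_left
  have hgz : ∀ z : M, Measurable (fun u => g u z) := fun z =>
    hgmeas.comp measurable_prodMk_right
  have hφabs : ∀ (x : T) (u : M), |φ x u| ≤ 1 := fun x u =>
    abs_le.2 ⟨by linarith [(hφ01 x u).1], (hφ01 x u).2⟩
  have hφne : ∀ (x : T) (u : M), φ x u ≠ 0 → dist u (x : M) < r := by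
    intro x u h
    by_contra hc
    exact h (hφsupp x u (by simpa [mem_ball] using hc))
  have hImeas : Measurable (fun u => ∫ z, g u z ∂μ) :=
    (MeasureTheory.StronglyMeasurable.integral_prod_right
      (hgmeas.stronglyMeasurable)).measurable
  have hJmeas : Measurable (fun u => ∫ z, g z u ∂μ) :=
    (MeasureTheory.StronglyMeasurable.integral_prod_left
      (hgmeas.stronglyMeasurable)).measurable
  have hIbound : ∀ u : M, |∫ z, g u z ∂μ| ≤ B * Vs := by
    intro u
    have h := aux_abs_integral_le (ν := μ) (hgu u).aestronglyMeasurable (hgB u)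
      measurableSet_ball (hμs u) (fun z hz => hgprop u z (by
        rw [dist_comm]; simpa [mem_ball] using hz))
    exact h.trans (mul_le_mul_of_nonneg_left (hVs u) hB)
  have hJbound : ∀ u : M, |∫ z, g z u ∂μ| ≤ B * Vs := by
    intro u
    have h := aux_abs_integral_le (ν := μ) (hgz u).aestronglyMeasurable
      (fun z => hgB z u) measurableSet_ball (hμs u)
      (fun z hz => hgprop z u (by simpa [mem_ball] using hz))
    exact h.trans (mul_le_mul_of_nonneg_left (hVs u) hB)
  have hinnerbound : ∀ (x : T) (u : M),
      |φ x u * ((∫ z, g u z ∂μ) - ∫ z, g z u ∂μ)| ≤ 2 * (B * Vs) := by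
    intro x u
    rw [abs_mul]
    calc |φ x u| * |(∫ z, g u z ∂μ) - ∫ z, g z u ∂μ|
        ≤ 1 * (|∫ z, g u z ∂μ| + |∫ z, g z u ∂μ|) := by
          apply mul_le_mul (hφabs x u) (abs_sub _ _) (abs_nonneg _) zero_le_one
      _ ≤ 1 * (B * Vs + B * Vs) := by
          have := hIbound u; have := hJbound u
          apply mul_le_mul_of_nonneg_left (by linarith) zero_le_one
      _ = 2 * (B * Vs) := by ring
  have hφIJint : ∀ x : T,
      Integrable (fun u => φ x u * ((∫ z, g u z ∂μ) - ∫ z, g z u ∂μ)) μ := by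
    intro x
    exact aux_integrable ((hφmeas x).mul (hImeas.sub hJmeas)).aestronglyMeasurable
      (hinnerbound x) measurableSet_ball (hμr x)
      (fun u hu => by simp [hφsupp x u hu])
  have hFbound : ∀ x : T,
      |∫ u, φ x u * ((∫ z, g u z ∂μ) - ∫ z, g z u ∂μ) ∂μ| ≤ 2 * (B * Vs) * Vr := by
    intro x
    have h := aux_abs_integral_le (ν := μ)
      ((hφmeas x).mul (hImeas.sub hJmeas)).aestronglyMeasurable
      (hinnerbound x) measurableSet_ball (hμr x)
      (fun u hu => by simp [hφsupp x u hu])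
    exact h.trans (mul_le_mul_of_nonneg_left (hVr x) (by positivity))
  have hF : Memℓp (fun x : T =>
      ∫ u, φ x u * ((∫ z, g u z ∂μ) - ∫ z, g z u ∂μ) ∂μ) (⊤ : ℝ≥0∞) := by
    apply memℓp_infty
    refine ⟨2 * (B * Vs) * Vr, ?_⟩
    rintro w ⟨x, rfl⟩
    simpa [Real.norm_eq_abs] using hFbound x
  refine ⟨hF, ?_⟩
  apply Submodule.le_topologicalClosure
  apply Submodule.subset_span
  -- the transfer function
  set a : T → T → ℝ := fun x y =>
    ∫ u, ∫ z, φ x u * φ y z * g u z ∂μ ∂μ with ha_def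
  have habs3 : ∀ (p q : T) (u z : M), |φ p u * φ q z * g u z| ≤ B := by
    intro p q u z
    calc |φ p u * φ q z * g u z| = |φ p u| * |φ q z| * |g u z| := by
          rw [abs_mul, abs_mul]
      _ ≤ 1 * 1 * B := by
          apply mul_le_mul (mul_le_mul (hφabs p u) (hφabs q z) (abs_nonneg _) zero_le_one)
            (hgB u z) (abs_nonneg _) (by norm_num)
      _ = B := by ring
  have hz_meas : ∀ (p q : T) (u : M),
      Measurable (fun z => φ p u * φ q z * g u z) :=
    fun p q u => ((measurable_const.mul (hφmeas q)).mul (hgu u))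
  have hz_int : ∀ (p q : T) (u : M),
      Integrable (fun z => φ p u * φ q z * g u z) μ := by
    intro p q u
    exact aux_integrable (hz_meas p q u).aestronglyMeasurable (habs3 p q u)
      measurableSet_ball (hμr q) (fun z hz => by simp [hφsupp q z hz])
  have hjoint : ∀ (p q : T),
      Measurable (fun w : M × M => φ p w.1 * φ q w.2 * g w.1 w.2) := by
    intro p q
    exact (((hφmeas p).comp measurable_fst).mul ((hφmeas q).comp measurable_snd)).mul hgmeas
  have hinner_meas : ∀ (p q : T),
      Measurable (fun u => ∫ z, φ p u * φ q z * g u z ∂μ) := by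
    intro p q
    exact (MeasureTheory.StronglyMeasurable.integral_prod_right
      (f := fun u z => φ p u * φ q z * g u z) (hjoint p q).stronglyMeasurable).measurable
  have hinner_bound : ∀ (p q : T) (u : M),
      |∫ z, φ p u * φ q z * g u z ∂μ| ≤ B * Vr := by
    intro p q u
    have h := aux_abs_integral_le (ν := μ) (hz_meas p q u).aestronglyMeasurable
      (habs3 p q u) measurableSet_ball (hμr q)
      (fun z hz => by simp [hφsupp q z hz])
    exact h.trans (mul_le_mul_of_nonneg_left (hVr q) hB)
  have hinner_zero : ∀ (p q : T) (u : M), u ∉ ball (p : M) r →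
      (∫ z, φ p u * φ q z * g u z ∂μ) = 0 := by
    intro p q u hu
    simp [hφsupp p u hu]
  have hinner_int : ∀ (p q : T),
      Integrable (fun u => ∫ z, φ p u * φ q z * g u z ∂μ) μ := by
    intro p q
    exact aux_integrable (hinner_meas p q).aestronglyMeasurable
      (hinner_bound p q) measurableSet_ball (hμr p) (hinner_zero p q)
  have ha_bound : ∀ x y : T, |a x y| ≤ B * Vr * Vr := by
    intro x y
    have h := aux_abs_integral_le (ν := μ) (hinner_meas x y).aestronglyMeasurable
      (hinner_bound x y) measurableSet_ball (hμr x) (hinner_zero x y)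
    exact h.trans (mul_le_mul_of_nonneg_left (hVr x) (by positivity))
  have ha_prop : ∀ x y : T, 2 * r + s ≤ dist (x : M) (y : M) → a x y = 0 := by
    intro x y hxy
    have hpt : ∀ u z : M, φ x u * φ y z * g u z = 0 := by
      intro u z
      by_cases h1 : u ∈ ball (x : M) r
      · by_cases h2 : z ∈ ball (y : M) r
        · have hd1 : dist u (x : M) < r := mem_ball.1 h1
          have hd2 : dist z (y : M) < r := mem_ball.1 h2
          have htri : dist (x : M) (y : M) ≤ dist (x : M) u + dist u z + dist z (y : M) :=
            dist_triangle4 _ _ _ _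
          rw [dist_comm (x : M) u] at htri
          have : s ≤ dist u z := by linarith
          simp [hgprop u z this]
        · simp [hφsupp y z h2]
      · simp [hφsupp x u h1]
    simp only [ha_def]
    simp [hpt]
  -- the constant
  set C : ℝ := max (B * Vr * Vr) (2 * r + s) + 1 with hC_def
  have hC1 : B * Vr * Vr ≤ C := by
    have := le_max_left (B * Vr * Vr) (2 * r + s); linarith
  have hC2 : 2 * r + s ≤ C := by
    have := le_max_right (B * Vr * Vr) (2 * r + s); linarith
  have hCpos : 0 < C := by
    have := le_max_right (B * Vr * Vr) (2 * r + s); linarith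
  refine ⟨C, hCpos, a, fun x y => (ha_bound x y).trans hC1,
    fun x y h => ha_prop x y (by linarith), ?_⟩
  -- the main identity
  intro x
  show (∫ u, φ x u * ((∫ z, g u z ∂μ) - ∫ z, g z u ∂μ) ∂μ) = ∑ᶠ y, (a x y - a y x)
  obtain ⟨N, hN⟩ := hulf (2 * r + s) (by linarith)
  have hfin : {y : T | dist (x : M) (y : M) ≤ 2 * r + s}.Finite := by
    have h1 := (hN (x : M)).1
    have hsub : {y : T | dist (x : M) (y : M) ≤ 2 * r + s} ⊆
        Subtype.val ⁻¹' (T ∩ closedBall (x : M) (2 * r + s)) := by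
      intro y hy
      exact ⟨y.2, by simpa [mem_closedBall, dist_comm] using hy⟩
    exact (h1.preimage Subtype.val_injective.injOn).subset hsub
  set Sx : Finset T := hfin.toFinset with hSx_def
  have mem_Sx : ∀ y : T, y ∈ Sx ↔ dist (x : M) (y : M) ≤ 2 * r + s := by
    intro y; rw [hSx_def, Set.Finite.mem_toFinset]; exact Iff.rfl
  -- partition-of-unity sum over Sx
  have hsum_z : ∀ z : M, (∀ y : T, φ y z ≠ 0 → y ∈ Sx) → ∑ y ∈ Sx, φ y z = 1 := by
    intro z hz
    rw [← hφsum z]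
    exact (finsum_eq_sum_of_support_subset _ (fun y hy => hz y hy)).symm
  -- Claim 1
  have claim1 : ∑ y ∈ Sx, a x y = ∫ u, φ x u * ∫ z, g u z ∂μ ∂μ := by
    rw [← integral_finset_sum Sx (fun y _ => hinner_int x y)]
    congr 1
    funext u
    rw [← integral_finset_sum Sx (fun y _ => hz_int x y u)]
    rw [← MeasureTheory.integral_const_mul]
    congr 1
    funext z
    by_cases hxu : φ x u = 0
    · simp [hxu]
    by_cases hg : g u z = 0
    · simp [hg]
    have hux : dist u (x : M) < r := hφne x u hxu
    have huz : dist u z < s := by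
      by_contra h
      exact hg (hgprop u z (le_of_not_gt h))
    have hsum1 : ∑ y ∈ Sx, φ y z = 1 := by
      apply hsum_z z
      intro y hy
      have hzy : dist z (y : M) < r := hφne y z hy
      have htri : dist (x : M) (y : M) ≤ dist (x : M) u + dist u z + dist z (y : M) :=
        dist_triangle4 _ _ _ _
      rw [dist_comm (x : M) u] at htri
      exact (mem_Sx y).2 (by linarith)
    calc ∑ y ∈ Sx, φ x u * φ y z * g u z
        = (φ x u * g u z) * ∑ y ∈ Sx, φ y z := by
          rw [Finset.mul_sum]
          exact Finset.sum_congr rfl fun y _ => by ring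
      _ = φ x u * g u z := by rw [hsum1, mul_one]
  -- Fubini per y
  have hfub : ∀ y : T, a y x = ∫ z, φ x z * ∫ u, φ y u * g u z ∂μ ∂μ := by
    intro y
    have hprod_int : Integrable (Function.uncurry fun u z => φ y u * φ x z * g u z)
        (μ.prod μ) := by
      apply aux_integrable (A := ball (y : M) r ×ˢ ball (x : M) r)
        (hjoint y x).aestronglyMeasurable (fun w => habs3 y x w.1 w.2)
        (measurableSet_ball.prod measurableSet_ball)
      · rw [Measure.prod_prod]
        exact ENNReal.mul_ne_top (hμr _) (hμr _)
      · rintro ⟨u, z⟩ hw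
        rw [Set.mem_prod, not_and_or] at hw
        rcases hw with h | h
        · simp [Function.uncurry, hφsupp y u h]
        · simp [Function.uncurry, hφsupp x z h]
    have hswap := MeasureTheory.integral_integral_swap hprod_int
    rw [ha_def]
    simp only
    rw [hswap]
    congr 1
    funext z
    rw [show (fun u => φ y u * φ x z * g u z) = fun u => φ x z * (φ y u * g u z) from
      funext fun u => by ring, MeasureTheory.integral_const_mul]
  -- integrability pieces for claim 2
  have hyg_int : ∀ (y : T) (z : M), Integrable (fun u => φ y u * g u z) μ := by
    intro y z
    apply aux_integrable ((hφmeas y).mul (hgz z)).aestronglyMeasurable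
      (B := B) (fun u => by
        rw [Pi.mul_apply, abs_mul]
        calc |φ y u| * |g u z| ≤ 1 * B :=
              mul_le_mul (hφabs y u) (hgB u z) (abs_nonneg _) zero_le_one
          _ = B := one_mul B)
      measurableSet_ball (hμr y) (fun u hu => by simp [hφsupp y u hu])
  have hyg_bound : ∀ (y : T) (z : M), |∫ u, φ y u * g u z ∂μ| ≤ B * Vr := by
    intro y z
    have h := aux_abs_integral_le (ν := μ) ((hφmeas y).mul (hgz z)).aestronglyMeasurable
      (B := B) (fun u => by
        rw [Pi.mul_apply, abs_mul]
        calc |φ y u| * |g u z| ≤ 1 * B :=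
              mul_le_mul (hφabs y u) (hgB u z) (abs_nonneg _) zero_le_one
          _ = B := one_mul B)
      measurableSet_ball (hμr y) (fun u hu => by simp [hφsupp y u hu])
    exact h.trans (mul_le_mul_of_nonneg_left (hVr y) hB)
  have hout_meas : ∀ y : T, Measurable (fun z => φ x z * ∫ u, φ y u * g u z ∂μ) := by
    intro y
    apply (hφmeas x).mul
    exact (MeasureTheory.StronglyMeasurable.integral_prod_left
      (f := fun u z => φ y u * g u z)
      ((((hφmeas y).comp measurable_fst).mul hgmeas).stronglyMeasurable)).measurable
  have hout_int : ∀ y : T, Integrable (fun z => φ x z * ∫ u, φ y u * g u z ∂μ) μ := by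
    intro y
    apply aux_integrable (hout_meas y).aestronglyMeasurable (B := B * Vr)
      (fun z => by
        rw [abs_mul]
        calc |φ x z| * |∫ u, φ y u * g u z ∂μ| ≤ 1 * (B * Vr) :=
              mul_le_mul (hφabs x z) (hyg_bound y z) (abs_nonneg _) zero_le_one
          _ = B * Vr := one_mul _)
      measurableSet_ball (hμr x) (fun z hz => by simp [hφsupp x z hz])
  -- Claim 2
  have claim2 : ∑ y ∈ Sx, a y x = ∫ u, φ x u * ∫ z, g z u ∂μ ∂μ := by
    calc ∑ y ∈ Sx, a y x
        = ∑ y ∈ Sx, ∫ z, φ x z * ∫ u, φ y u * g u z ∂μ ∂μ :=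
          Finset.sum_congr rfl fun y _ => hfub y
      _ = ∫ z, ∑ y ∈ Sx, φ x z * ∫ u, φ y u * g u z ∂μ ∂μ :=
          (integral_finset_sum Sx (fun y _ => hout_int y)).symm
      _ = ∫ z, φ x z * ∫ u, g u z ∂μ ∂μ := by
          congr 1
          funext z
          rw [← Finset.mul_sum]
          by_cases hxz : φ x z = 0
          · simp [hxz]
          have hzx : dist z (x : M) < r := hφne x z hxz
          congr 1
          rw [← integral_finset_sum Sx (fun y _ => hyg_int y z)]
          congr 1
          funext u
          by_cases hg : g u z = 0
          · simp [hg]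
          have huz : dist u z < s := by
            by_contra h
            exact hg (hgprop u z (le_of_not_gt h))
          have hsum1 : ∑ y ∈ Sx, φ y u = 1 := by
            apply hsum_z u
            intro y hy
            have huy : dist u (y : M) < r := hφne y u hy
            have htri : dist (x : M) (y : M) ≤
                dist (x : M) z + dist z u + dist u (y : M) := dist_triangle4 _ _ _ _
            rw [dist_comm (x : M) z] at htri
            rw [dist_comm z u] at htri
            exact (mem_Sx y).2 (by linarith)
          rw [← Finset.sum_mul, hsum1, one_mul]
  -- final assembly
  have hI_int : Integrable (fun u => φ x u * ∫ z, g u z ∂μ) μ := by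
    apply aux_integrable ((hφmeas x).mul hImeas).aestronglyMeasurable (B := B * Vs)
      (fun u => by
        rw [Pi.mul_apply, abs_mul]
        calc |φ x u| * |∫ z, g u z ∂μ| ≤ 1 * (B * Vs) :=
              mul_le_mul (hφabs x u) (hIbound u) (abs_nonneg _) zero_le_one
          _ = B * Vs := one_mul _)
      measurableSet_ball (hμr x) (fun u hu => by simp [hφsupp x u hu])
  have hJ_int : Integrable (fun u => φ x u * ∫ z, g z u ∂μ) μ := by
    apply aux_integrable ((hφmeas x).mul hJmeas).aestronglyMeasurable (B := B * Vs)
      (fun u => by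
        rw [Pi.mul_apply, abs_mul]
        calc |φ x u| * |∫ z, g z u ∂μ| ≤ 1 * (B * Vs) :=
              mul_le_mul (hφabs x u) (hJbound u) (abs_nonneg _) zero_le_one
          _ = B * Vs := one_mul _)
      measurableSet_ball (hμr x) (fun u hu => by simp [hφsupp x u hu])
  have hsupp_fin : (Function.support fun y : T => a x y - a y x) ⊆ ↑Sx := by
    intro y hy
    by_contra hc
    have hd : 2 * r + s < dist (x : M) (y : M) := by
      by_contra hd
      exact hc ((mem_Sx y).2 (le_of_not_gt hd))
    have h1 : a x y = 0 := ha_prop x y hd.le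
    have h2 : a y x = 0 := ha_prop y x (by rw [dist_comm]; exact hd.le)
    exact hy (by simp [h1, h2])
  rw [finsum_eq_sum_of_support_subset _ hsupp_fin]
  calc ∫ u, φ x u * ((∫ z, g u z ∂μ) - ∫ z, g z u ∂μ) ∂μ
      = ∫ u, (φ x u * ∫ z, g u z ∂μ) - (φ x u * ∫ z, g z u ∂μ) ∂μ := by
        congr 1; funext u; ring
    _ = (∫ u, φ x u * ∫ z, g u z ∂μ ∂μ) - ∫ u, φ x u * ∫ z, g z u ∂μ ∂μ :=
        integral_sub hI_int hJ_int
    _ = (∑ y ∈ Sx, a x y) - ∑ y ∈ Sx, a y x := by rw [claim1, claim2]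
    _ = ∑ y ∈ Sx, (a x y - a y x) := (Finset.sum_sub_distrib _ _).symm

end BGTraceAux

/-- **The bounded-geometry trace is a trace: `tr_b(k₁ ∘ k₂) = tr_b(k₂ ∘ k₁)`.**
Let `M` carry a Borel measure with uniformly bounded ball volumes, `T` a uniformly
locally finite `r`-lattice, `(φ_x)_{x∈T}` a measurable partition of unity subordinate to
the `r`-balls of `T`, `k₁` a uniformly bounded measurable matrix-valued kernel and `k₂` a
uniformly bounded measurable kernel of propagation `< s`.  Then the function
`x ↦ ∫ φ_x(u) · tr((k₁∘k₂)(u,u) − (k₂∘k₁)(u,u)) dμ(u)` on `T` is bounded and lies in the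
sup-norm closure `V̄(T)` of the transfer subspace; i.e. `tr_b(k₁∘k₂) = tr_b(k₂∘k₁)` in
`H⁰_b = ℬ(T)/V̄(T)`. -/
theorem trace_property_of_bg_trace [MeasurableSpace M] [BorelSpace M]
    (μ : Measure M)
    (hvol : ∀ t : ℝ, 0 < t → ∃ Vt : ℝ, ∀ x : M, μ (ball x t) ≤ ENNReal.ofReal Vt)
    (r : ℝ) (hr : 0 < r) (T : Set M)
    (hsep : ∀ x ∈ T, ∀ y ∈ T, x ≠ y → r ≤ dist x y)
    (hcov : ∀ x : M, ∃ t ∈ T, dist x t < r)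
    (hulf : UnifLocFinite T)
    (φ : T → M → ℝ)
    (hφmeas : ∀ x : T, Measurable (φ x))
    (hφ01 : ∀ (x : T) (u : M), φ x u ∈ Set.Icc (0 : ℝ) 1)
    (hφsupp : ∀ (x : T) (u : M), u ∉ ball (x : M) r → φ x u = 0)
    (hφsum : ∀ u : M, ∑ᶠ x : T, φ x u = 1)
    (m : ℕ) (k₁ k₂ : M → M → Matrix (Fin m) (Fin m) ℝ)
    (hk₁meas : ∀ i j, Measurable fun p : M × M => k₁ p.1 p.2 i j)
    (hk₂meas : ∀ i j, Measurable fun p : M × M => k₂ p.1 p.2 i j)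
    (K₁ K₂ : ℝ)
    (hK₁ : ∀ x y i j, |k₁ x y i j| ≤ K₁)
    (hK₂ : ∀ x y i j, |k₂ x y i j| ≤ K₂)
    (s : ℝ) (hs : 0 < s) (hprop : ∀ x y : M, s ≤ dist x y → k₂ x y = 0) :
    ∃ hF : Memℓp (fun x : T =>
        ∫ u, φ x u * ((∑ i, ∫ z, ∑ l, k₁ u z i l * k₂ z u l i ∂μ)
          - ∑ i, ∫ z, ∑ l, k₂ u z i l * k₁ z u l i ∂μ) ∂μ) (⊤ : ℝ≥0∞),
      (⟨fun x : T =>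
        ∫ u, φ x u * ((∑ i, ∫ z, ∑ l, k₁ u z i l * k₂ z u l i ∂μ)
          - ∑ i, ∫ z, ∑ l, k₂ u z i l * k₁ z u l i ∂μ) ∂μ, hF⟩ :
        lp (fun _ : T => ℝ) ⊤) ∈ TransferClosure T := by
  rcases isEmpty_or_nonempty M with hM | hM
  · -- degenerate case: `M` is empty, so `T` is empty and everything is trivial
    haveI : IsEmpty T := ⟨fun y => hM.false y.1⟩
    have hF : Memℓp (fun x : T =>
        ∫ u, φ x u * ((∑ i, ∫ z, ∑ l, k₁ u z i l * k₂ z u l i ∂μ)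
          - ∑ i, ∫ z, ∑ l, k₂ u z i l * k₁ z u l i ∂μ) ∂μ) (⊤ : ℝ≥0∞) := by
      apply memℓp_infty
      rw [Set.range_eq_empty]
      exact bddAbove_empty
    refine ⟨hF, ?_⟩
    have h0 : (⟨fun x : T =>
        ∫ u, φ x u * ((∑ i, ∫ z, ∑ l, k₁ u z i l * k₂ z u l i ∂μ)
          - ∑ i, ∫ z, ∑ l, k₂ u z i l * k₁ z u l i ∂μ) ∂μ, hF⟩ :
        lp (fun _ : T => ℝ) ⊤) = 0 :=
      Subtype.ext (funext fun y => isEmptyElim y)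
    rw [h0]
    exact (TransferClosure T).zero_mem
  · -- main case
    obtain ⟨Vs₀, hVs₀⟩ := hvol s hs
    have hμs : ∀ x : M, μ (ball x s) ≠ ⊤ :=
      fun x => ((hVs₀ x).trans_lt ENNReal.ofReal_lt_top).ne
    -- entrywise bounds
    have hrow : ∀ (u z : M) (i : Fin m),
        |∑ l, k₁ u z i l * k₂ z u l i| ≤ (m : ℝ) * (K₁ * K₂) := by
      intro u z i
      calc |∑ l, k₁ u z i l * k₂ z u l i| ≤ ∑ l, |k₁ u z i l * k₂ z u l i| :=
            Finset.abs_sum_le_sum_abs _ _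
        _ ≤ ∑ _l : Fin m, K₁ * K₂ := Finset.sum_le_sum fun l _ => by
            rw [abs_mul]
            exact mul_le_mul (hK₁ u z i l) (hK₂ z u l i) (abs_nonneg _)
              ((abs_nonneg _).trans (hK₁ u z i l))
        _ = (m : ℝ) * (K₁ * K₂) := by simp [Finset.sum_const, nsmul_eq_mul]
    have hrow2 : ∀ (u z : M) (i : Fin m),
        |∑ l, k₂ u z i l * k₁ z u l i| ≤ (m : ℝ) * (K₁ * K₂) := by
      intro u z i
      calc |∑ l, k₂ u z i l * k₁ z u l i| ≤ ∑ l, |k₂ u z i l * k₁ z u l i| :=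
            Finset.abs_sum_le_sum_abs _ _
        _ ≤ ∑ _l : Fin m, K₁ * K₂ := Finset.sum_le_sum fun l _ => by
            rw [abs_mul, mul_comm]
            exact mul_le_mul (hK₁ z u l i) (hK₂ u z i l) (abs_nonneg _)
              ((abs_nonneg _).trans (hK₁ z u l i))
        _ = (m : ℝ) * (K₁ * K₂) := by simp [Finset.sum_const, nsmul_eq_mul]
    -- the scalar kernel `g u z = tr(k₁(u,z)·k₂(z,u))` and its properties
    have hgB : ∀ u z : M, |∑ i, ∑ l, k₁ u z i l * k₂ z u l i|
        ≤ (m : ℝ) * ((m : ℝ) * (K₁ * K₂)) := by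
      intro u z
      calc |∑ i, ∑ l, k₁ u z i l * k₂ z u l i|
          ≤ ∑ i, |∑ l, k₁ u z i l * k₂ z u l i| := Finset.abs_sum_le_sum_abs _ _
        _ ≤ ∑ _i : Fin m, (m : ℝ) * (K₁ * K₂) :=
            Finset.sum_le_sum fun i _ => hrow u z i
        _ = (m : ℝ) * ((m : ℝ) * (K₁ * K₂)) := by simp [Finset.sum_const, nsmul_eq_mul]
    have hB0 : 0 ≤ (m : ℝ) * ((m : ℝ) * (K₁ * K₂)) := by
      rcases Nat.eq_zero_or_pos m with hm | hm
      · simp [hm]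
      · obtain ⟨x₀⟩ := hM
        have i0 : Fin m := ⟨0, hm⟩
        have hK₁0 : 0 ≤ K₁ := (abs_nonneg _).trans (hK₁ x₀ x₀ i0 i0)
        have hK₂0 : 0 ≤ K₂ := (abs_nonneg _).trans (hK₂ x₀ x₀ i0 i0)
        positivity
    have hgmeas : Measurable (Function.uncurry
        fun u z : M => ∑ i, ∑ l, k₁ u z i l * k₂ z u l i) := by
      exact Finset.measurable_sum _ fun i _ => Finset.measurable_sum _ fun l _ =>
        (hk₁meas i l).mul ((hk₂meas l i).comp measurable_swap)
    have hgprop : ∀ u z : M, s ≤ dist u z →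
        ∑ i, ∑ l, k₁ u z i l * k₂ z u l i = 0 := by
      intro u z h
      have h2 : k₂ z u = 0 := hprop z u (by rwa [dist_comm])
      simp [h2]
    -- integrability of the rows
    have hint1 : ∀ (u : M) (i : Fin m),
        Integrable (fun z => ∑ l, k₁ u z i l * k₂ z u l i) μ := by
      intro u i
      apply BGTraceAux.aux_integrable
        (Finset.measurable_sum (f := fun l z => k₁ u z i l * k₂ z u l i)
          Finset.univ (fun l _ =>
            ((hk₁meas i l).comp measurable_prodMk_left).mul
              ((hk₂meas l i).comp measurable_prodMk_right))).aestronglyMeasurable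
        (fun z => hrow u z i) measurableSet_ball (hμs u)
      intro z hz
      have h2 : k₂ z u = 0 := hprop z u (by simpa [mem_ball] using hz)
      simp [h2]
    have hint2 : ∀ (u : M) (i : Fin m),
        Integrable (fun z => ∑ l, k₂ u z i l * k₁ z u l i) μ := by
      intro u i
      apply BGTraceAux.aux_integrable
        (Finset.measurable_sum (f := fun l z => k₂ u z i l * k₁ z u l i)
          Finset.univ (fun l _ =>
            ((hk₂meas i l).comp measurable_prodMk_left).mul
              ((hk₁meas l i).comp measurable_prodMk_right))).aestronglyMeasurable
        (fun z => hrow2 u z i) measurableSet_ball (hμs u)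
      intro z hz
      have h2 : k₂ u z = 0 := hprop u z (by rw [dist_comm]; simpa [mem_ball] using hz)
      simp [h2]
    -- rewrite the statement function in terms of `g`
    have h1 : ∀ u : M, (∑ i, ∫ z, ∑ l, k₁ u z i l * k₂ z u l i ∂μ)
        = ∫ z, ∑ i, ∑ l, k₁ u z i l * k₂ z u l i ∂μ :=
      fun u => (integral_finset_sum Finset.univ (fun i _ => hint1 u i)).symm
    have h2 : ∀ u : M, (∑ i, ∫ z, ∑ l, k₂ u z i l * k₁ z u l i ∂μ)
        = ∫ z, ∑ i, ∑ l, k₁ z u i l * k₂ u z l i ∂μ := by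
      intro u
      rw [← integral_finset_sum Finset.univ (fun i _ => hint2 u i)]
      congr 1
      funext z
      rw [Finset.sum_comm]
      exact Finset.sum_congr rfl fun i _ => Finset.sum_congr rfl fun l _ => mul_comm _ _
    have hEq : (fun x : T =>
        ∫ u, φ x u * ((∑ i, ∫ z, ∑ l, k₁ u z i l * k₂ z u l i ∂μ)
          - ∑ i, ∫ z, ∑ l, k₂ u z i l * k₁ z u l i ∂μ) ∂μ)
        = fun x : T =>
        ∫ u, φ x u * ((∫ z, ∑ i, ∑ l, k₁ u z i l * k₂ z u l i ∂μ)
          - ∫ z, ∑ i, ∑ l, k₁ z u i l * k₂ u z l i ∂μ) ∂μ := by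
      funext x
      congr 1
      funext u
      rw [h1 u, h2 u]
    rw [hEq]
    exact BGTraceAux.core μ hvol r hr T hulf φ hφmeas hφ01 hφsupp hφsum s hs
      (fun u z => ∑ i, ∑ l, k₁ u z i l * k₂ z u l i) hgmeas
      ((m : ℝ) * ((m : ℝ) * (K₁ * K₂))) hB0 hgB hgprop
end
end

section
/- Let (M, d) be a metric space with a Borel measure μ such that for every t > 0 there is V_t < ∞ with μ(B(x, t)) ≤ V_t for all x ∈ M. Let r > 0, let T ⊆ M be a uniformly locally finite r-lattice, and let (φ_x)_{x∈T} and (ψ_x)_{x∈T} be two measurable partitions of unity subordinate to the balls {B(x, r)}_{x∈T} (each φ_x, ψ_x : M → [0,1] vanishes outside B(x, r), and Σ_{x∈T} φ_x = Σ_{x∈T} ψ_x = 1 pointwise). Then for every bounded measurable function f : M → ℝ, the function T → ℝ given by x ↦ ∫_M (φ_x(u) − ψ_x(u)) f(u) dμ(u) lies in the transfer subspace V(T). Consequently the class of x ↦ ∫_M φ_x f dμ in ℬ(T)/V̄(T) does not depend on the choice of partition of unity: the map ∫_F : ℬ(M) → H⁰_b(M/TM) is well defined. -/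
open Metric MeasureTheory
open scoped ENNReal

noncomputable section

set_option synthInstance.maxHeartbeats 400000
set_option maxHeartbeats 800000

variable {M : Type*} [MetricSpace M]

/-- **The BG integration map `∫_F : ℬ(M) → H⁰_b(M/TM)` is well defined.**
If `(φ_x)` and `(ψ_x)` are two measurable partitions of unity subordinate to the
`r`-balls of a uniformly locally finite `r`-lattice `T`, then for every bounded
measurable `f : M → ℝ` the function `x ↦ ∫ (φ_x − ψ_x)·f dμ` lies in the transfer
subspace `V(T)`; consequently the class of `x ↦ ∫ φ_x · f dμ` in `ℬ(T)/V̄(T)` does not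
depend on the choice of the partition of unity. -/
theorem bg_integration_well_defined [MeasurableSpace M] [BorelSpace M]
    (μ : Measure M)
    (hvol : ∀ t : ℝ, 0 < t → ∃ Vt : ℝ, ∀ x : M, μ (ball x t) ≤ ENNReal.ofReal Vt)
    (r : ℝ) (hr : 0 < r) (T : Set M)
    (hsep : ∀ x ∈ T, ∀ y ∈ T, x ≠ y → r ≤ dist x y)
    (hcov : ∀ x : M, ∃ t ∈ T, dist x t < r)
    (hulf : UnifLocFinite T)
    (φ ψ : T → M → ℝ)
    (hφmeas : ∀ x : T, Measurable (φ x)) (hψmeas : ∀ x : T, Measurable (ψ x))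
    (hφ01 : ∀ (x : T) (u : M), φ x u ∈ Set.Icc (0 : ℝ) 1)
    (hψ01 : ∀ (x : T) (u : M), ψ x u ∈ Set.Icc (0 : ℝ) 1)
    (hφsupp : ∀ (x : T) (u : M), u ∉ ball (x : M) r → φ x u = 0)
    (hψsupp : ∀ (x : T) (u : M), u ∉ ball (x : M) r → ψ x u = 0)
    (hφsum : ∀ u : M, ∑ᶠ x : T, φ x u = 1)
    (hψsum : ∀ u : M, ∑ᶠ x : T, ψ x u = 1)
    (f : M → ℝ) (hfmeas : Measurable f) (C : ℝ) (hf : ∀ u : M, |f u| ≤ C) :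
    (∃ hG : Memℓp (fun x : T => ∫ u, (φ x u - ψ x u) * f u ∂μ) (⊤ : ℝ≥0∞),
      (⟨fun x : T => ∫ u, (φ x u - ψ x u) * f u ∂μ, hG⟩ :
        lp (fun _ : T => ℝ) ⊤) ∈ TransferSub T) ∧
    (∀ (hφF : Memℓp (fun x : T => ∫ u, φ x u * f u ∂μ) (⊤ : ℝ≥0∞))
        (hψF : Memℓp (fun x : T => ∫ u, ψ x u * f u ∂μ) (⊤ : ℝ≥0∞)),
      (Submodule.Quotient.mk (⟨fun x : T => ∫ u, φ x u * f u ∂μ, hφF⟩ :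
          lp (fun _ : T => ℝ) ⊤) :
        lp (fun _ : T => ℝ) ⊤ ⧸ TransferClosure T) =
      Submodule.Quotient.mk (⟨fun x : T => ∫ u, ψ x u * f u ∂μ, hψF⟩ :
          lp (fun _ : T => ℝ) ⊤)) := by
  classical
  -- Volume bound at radius r, normalized to be nonnegative
  obtain ⟨Vr0, hVr0⟩ := hvol r hr
  set Vr : ℝ := max Vr0 0 with hVrdef
  have hVrnn : (0 : ℝ) ≤ Vr := le_max_right _ _
  have hVr : ∀ x : M, μ (ball x r) ≤ ENNReal.ofReal Vr := fun x =>
    (hVr0 x).trans (ENNReal.ofReal_le_ofReal (le_max_left _ _))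
  have hμball : ∀ x : M, μ (ball x r) < ⊤ := fun x =>
    (hVr x).trans_lt ENNReal.ofReal_lt_top
  have hμballr : ∀ x : M, (μ (ball x r)).toReal ≤ Vr := fun x =>
    ENNReal.toReal_le_of_le_ofReal hVrnn (hVr x)
  have hCnn : ∀ _ : T, (0 : ℝ) ≤ C := fun x => (abs_nonneg _).trans (hf (x : M))
  have habs1 : ∀ (g : T → M → ℝ), (∀ x u, g x u ∈ Set.Icc (0 : ℝ) 1) →
      ∀ (x : T) (u : M), |g x u| ≤ 1 := fun g hg x u =>
    abs_le.2 ⟨by linarith [(hg x u).1], (hg x u).2⟩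
  -- integrability of bounded functions supported in one r-ball
  have hint : ∀ (g : M → ℝ) (c : M), Measurable g → (∀ u, |g u| ≤ C) →
      (∀ u, u ∉ ball c r → g u = 0) → Integrable g μ := by
    intro g c hgm hgb hgs
    have hsupp : Function.support g ⊆ ball c r := fun u hu => by
      by_contra h; exact hu (hgs u h)
    rw [← integrableOn_iff_integrable_of_support_subset hsupp]
    have hconst : IntegrableOn (fun _ : M => C) (ball c r) μ :=
      integrableOn_const (hμball c).ne
    exact hconst.mono' hgm.aestronglyMeasurable.restrict
      (Filter.Eventually.of_forall fun u => by simpa [Real.norm_eq_abs] using hgb u)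
  -- uniform bound for integrals of such functions
  have hbnd : ∀ (g : M → ℝ) (c : M), 0 ≤ C → Measurable g → (∀ u, |g u| ≤ C) →
      (∀ u, u ∉ ball c r → g u = 0) → |∫ u, g u ∂μ| ≤ C * Vr := by
    intro g c hC hgm hgb hgs
    have h1 : ∫ u in ball c r, g u ∂μ = ∫ u, g u ∂μ :=
      setIntegral_eq_integral_of_forall_compl_eq_zero fun u hu => hgs u hu
    rw [← h1, ← Real.norm_eq_abs]
    calc ‖∫ u in ball c r, g u ∂μ‖ ≤ C * (μ (ball c r)).toReal :=
          norm_setIntegral_le_of_norm_le_const (hμball c)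
            (fun u _ => by simpa [Real.norm_eq_abs] using hgb u)
      _ ≤ C * Vr := mul_le_mul_of_nonneg_left (hμballr c) hC
  -- pointwise bounds
  have hφfb : ∀ (x : T) (u : M), |φ x u * f u| ≤ C := by
    intro x u
    rw [abs_mul]
    calc |φ x u| * |f u| ≤ 1 * C :=
          mul_le_mul (habs1 φ hφ01 x u) (hf u) (abs_nonneg _) zero_le_one
      _ = C := one_mul C
  have hψfb : ∀ (x : T) (u : M), |ψ x u * f u| ≤ C := by
    intro x u
    rw [abs_mul]
    calc |ψ x u| * |f u| ≤ 1 * C :=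
          mul_le_mul (habs1 ψ hψ01 x u) (hf u) (abs_nonneg _) zero_le_one
      _ = C := one_mul C
  have htrib : ∀ (x y : T) (u : M), |φ x u * ψ y u * f u| ≤ C := by
    intro x y u
    rw [abs_mul, abs_mul]
    have h1 := habs1 φ hφ01 x u
    have h2 := habs1 ψ hψ01 y u
    have h3 := hf u
    have h12 : |φ x u| * |ψ y u| ≤ 1 := by
      calc |φ x u| * |ψ y u| ≤ 1 * 1 := mul_le_mul h1 h2 (abs_nonneg _) zero_le_one
        _ = 1 := one_mul 1
    calc |φ x u| * |ψ y u| * |f u| ≤ 1 * C :=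
          mul_le_mul h12 h3 (abs_nonneg _) zero_le_one
      _ = C := one_mul C
  -- integrability facts
  have hφf_int : ∀ x : T, Integrable (fun u => φ x u * f u) μ := fun x =>
    hint _ (x : M) ((hφmeas x).mul hfmeas) (hφfb x)
      (fun u hu => by rw [hφsupp x u hu, zero_mul])
  have hψf_int : ∀ x : T, Integrable (fun u => ψ x u * f u) μ := fun x =>
    hint _ (x : M) ((hψmeas x).mul hfmeas) (hψfb x)
      (fun u hu => by rw [hψsupp x u hu, zero_mul])
  have htri_int : ∀ x y : T, Integrable (fun u => φ x u * ψ y u * f u) μ := fun x y =>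
    hint _ (x : M) (((hφmeas x).mul (hψmeas y)).mul hfmeas) (htrib x y)
      (fun u hu => by rw [hφsupp x u hu, zero_mul, zero_mul])
  have htri_int' : ∀ x y : T, Integrable (fun u => φ y u * ψ x u * f u) μ := fun x y =>
    hint _ (x : M) (((hφmeas y).mul (hψmeas x)).mul hfmeas) (htrib y x)
      (fun u hu => by rw [hψsupp x u hu, mul_zero, zero_mul])
  -- the finite neighbourhoods
  obtain ⟨N, hN⟩ := hulf (2 * r) (by linarith)
  have hFfin : ∀ x : M, ({y : T | dist (y : M) x ≤ 2 * r} : Set T).Finite := by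
    intro x
    have h1 := (hN x).1
    have h2 : ({y : T | dist (y : M) x ≤ 2 * r} : Set T) ⊆
        (Subtype.val ⁻¹' (T ∩ closedBall x (2 * r))) := by
      intro y hy
      exact ⟨y.2, mem_closedBall.2 hy⟩
    exact (h1.preimage Subtype.coe_injective.injOn).subset h2
  set F : T → Finset T := fun x => (hFfin (x : M)).toFinset with hFdef
  have hFmem : ∀ x y : T, y ∈ F x ↔ dist (y : M) (x : M) ≤ 2 * r := by
    intro x y
    simp [hFdef, Set.Finite.mem_toFinset]
  -- the transfer kernel
  set a : T → T → ℝ := fun x y => ∫ u, φ x u * ψ y u * f u ∂μ with hadef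
  have ha0 : ∀ x y : T, 2 * r ≤ dist (x : M) (y : M) → a x y = 0 := by
    intro x y h
    have hz : (fun u => φ x u * ψ y u * f u) = fun _ => 0 := by
      funext u
      by_cases h1 : u ∈ ball (x : M) r
      · have h2 : u ∉ ball (y : M) r := by
          intro h2
          rw [mem_ball] at h1 h2
          have := dist_triangle (x : M) u (y : M)
          rw [dist_comm u (x : M)] at h1
          linarith
        rw [hψsupp y u h2, mul_zero, zero_mul]
      · rw [hφsupp x u h1, zero_mul, zero_mul]
    simp only [hadef, hz, integral_zero]
  have habnd : ∀ x y : T, |a x y| ≤ C * Vr := fun x y =>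
    hbnd _ (x : M) (hCnn x) (((hφmeas x).mul (hψmeas y)).mul hfmeas) (htrib x y)
      (fun u hu => by rw [hφsupp x u hu, zero_mul, zero_mul])
  -- row sums
  have keyφ : ∀ x : T, ∫ u, φ x u * f u ∂μ = ∑ y ∈ F x, a x y := by
    intro x
    have hpt : ∀ u : M, φ x u * f u = ∑ y ∈ F x, φ x u * ψ y u * f u := by
      intro u
      by_cases hu : u ∈ ball (x : M) r
      · have hsupp : (Function.support fun y : T => ψ y u) ⊆ (F x : Set T) := by
          intro y hy
          have h2 : u ∈ ball (y : M) r := by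
            by_contra h
            exact hy (hψsupp y u h)
          rw [mem_ball] at hu h2
          have := dist_triangle (y : M) u (x : M)
          rw [dist_comm u (y : M)] at h2
          exact (hFmem x y).2 (by linarith)
        have hsum : ∑ y ∈ F x, ψ y u = 1 := by
          rw [← finsum_eq_sum_of_support_subset _ hsupp, hψsum u]
        calc φ x u * f u = (∑ y ∈ F x, ψ y u) * (φ x u * f u) := by rw [hsum, one_mul]
          _ = ∑ y ∈ F x, φ x u * ψ y u * f u := by
              rw [Finset.sum_mul]
              exact Finset.sum_congr rfl fun y _ => by ring
      · rw [hφsupp x u hu, zero_mul]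
        rw [Finset.sum_eq_zero]
        intro y _
        simp
    calc ∫ u, φ x u * f u ∂μ = ∫ u, ∑ y ∈ F x, φ x u * ψ y u * f u ∂μ := by
          exact integral_congr_ae (Filter.Eventually.of_forall hpt)
      _ = ∑ y ∈ F x, ∫ u, φ x u * ψ y u * f u ∂μ :=
          integral_finset_sum _ fun y _ => htri_int x y
      _ = ∑ y ∈ F x, a x y := rfl
  have keyψ : ∀ x : T, ∫ u, ψ x u * f u ∂μ = ∑ y ∈ F x, a y x := by
    intro x
    have hpt : ∀ u : M, ψ x u * f u = ∑ y ∈ F x, φ y u * ψ x u * f u := by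
      intro u
      by_cases hu : u ∈ ball (x : M) r
      · have hsupp : (Function.support fun y : T => φ y u) ⊆ (F x : Set T) := by
          intro y hy
          have h2 : u ∈ ball (y : M) r := by
            by_contra h
            exact hy (hφsupp y u h)
          rw [mem_ball] at hu h2
          have := dist_triangle (y : M) u (x : M)
          rw [dist_comm u (y : M)] at h2
          exact (hFmem x y).2 (by linarith)
        have hsum : ∑ y ∈ F x, φ y u = 1 := by
          rw [← finsum_eq_sum_of_support_subset _ hsupp, hφsum u]
        calc ψ x u * f u = (∑ y ∈ F x, φ y u) * (ψ x u * f u) := by rw [hsum, one_mul]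
          _ = ∑ y ∈ F x, φ y u * ψ x u * f u := by
              rw [Finset.sum_mul]
              exact Finset.sum_congr rfl fun y _ => by ring
      · rw [hψsupp x u hu, zero_mul]
        rw [Finset.sum_eq_zero]
        intro y _
        simp
    calc ∫ u, ψ x u * f u ∂μ = ∫ u, ∑ y ∈ F x, φ y u * ψ x u * f u ∂μ := by
          exact integral_congr_ae (Filter.Eventually.of_forall hpt)
      _ = ∑ y ∈ F x, ∫ u, φ y u * ψ x u * f u ∂μ :=
          integral_finset_sum _ fun y _ => htri_int' x y
      _ = ∑ y ∈ F x, a y x := rfl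
  -- the difference function
  set G : T → ℝ := fun x => ∫ u, (φ x u - ψ x u) * f u ∂μ with hGdef
  have hGsplit : ∀ x : T, G x = (∫ u, φ x u * f u ∂μ) - ∫ u, ψ x u * f u ∂μ := by
    intro x
    have : (fun u => (φ x u - ψ x u) * f u) =
        fun u => φ x u * f u - ψ x u * f u := by
      funext u; ring
    rw [hGdef]
    simp only [this]
    exact integral_sub (hφf_int x) (hψf_int x)
  have hGfinsum : ∀ x : T, G x = ∑ᶠ y, (a x y - a y x) := by
    intro x
    have hsupp : (Function.support fun y : T => a x y - a y x) ⊆ (F x : Set T) := by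
      intro y hy
      by_contra h
      have hd : 2 * r < dist (y : M) (x : M) := by
        by_contra h'
        exact h ((hFmem x y).2 (le_of_not_gt h'))
      have h1 : a x y = 0 := ha0 x y (by rw [dist_comm] at hd; linarith)
      have h2 : a y x = 0 := ha0 y x (by linarith)
      exact hy (by simp [h1, h2])
    rw [finsum_eq_sum_of_support_subset _ hsupp, Finset.sum_sub_distrib,
      hGsplit x, keyφ x, keyψ x]
  -- boundedness of G
  have hG : Memℓp G (⊤ : ℝ≥0∞) := by
    apply memℓp_infty
    refine ⟨C * Vr, ?_⟩
    rintro t ⟨x, rfl⟩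
    have hb : ∀ u : M, |(φ x u - ψ x u) * f u| ≤ C := by
      intro u
      rw [abs_mul]
      have h1 := hφ01 x u
      have h2 := hψ01 x u
      have h3 : |φ x u - ψ x u| ≤ 1 := abs_le.2 ⟨by linarith [h1.1, h2.2], by linarith [h1.2, h2.1]⟩
      calc |φ x u - ψ x u| * |f u| ≤ 1 * C :=
            mul_le_mul h3 (hf u) (abs_nonneg _) zero_le_one
        _ = C := one_mul C
    have := hbnd (fun u => (φ x u - ψ x u) * f u) (x : M) (hCnn x)
      (((hφmeas x).sub (hψmeas x)).mul hfmeas) hb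
      (fun u hu => by simp [hφsupp x u hu, hψsupp x u hu])
    simpa [Real.norm_eq_abs, hGdef] using this
  -- membership in the transfer subspace
  have hmem : (⟨G, hG⟩ : lp (fun _ : T => ℝ) ⊤) ∈ TransferSub T := by
    apply Submodule.subset_span
    refine ⟨max (2 * r) (C * Vr) + 1, by positivity, a, ?_, ?_, ?_⟩
    · intro x y
      calc |a x y| ≤ C * Vr := habnd x y
        _ ≤ max (2 * r) (C * Vr) + 1 := by
            have := le_max_right (2 * r) (C * Vr); linarith
    · intro x y h
      apply ha0
      have := le_max_left (2 * r) (C * Vr)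
      linarith
    · intro x
      exact hGfinsum x
  refine ⟨⟨hG, hmem⟩, ?_⟩
  intro hφF hψF
  rw [Submodule.Quotient.eq]
  have hdiff : (⟨fun x : T => ∫ u, φ x u * f u ∂μ, hφF⟩ : lp (fun _ : T => ℝ) ⊤) -
      ⟨fun x : T => ∫ u, ψ x u * f u ∂μ, hψF⟩ = ⟨G, hG⟩ := by
    apply lp.ext
    rw [lp.coeFn_sub]
    funext x
    simp only [Pi.sub_apply]
    exact (hGsplit x).symm
  rw [hdiff]
  exact Submodule.le_topologicalClosure _ hmem
end
end

section
/- Let V₊ and V₋ be finite-dimensional complex inner product spaces, let D₊ : V₊ → V₋ be a linear map with adjoint D₋ : V₋ → V₊ (so ⟨D₊u, v⟩ = ⟨u, D₋v⟩), and let t > 0 be a real number. Then the traces of the operator exponentials satisfy the McKean–Singer identity: tr( exp(−t · D₋∘D₊) ) − tr( exp(−t · D₊∘D₋) ) = dim ker(D₊) − dim ker(D₋). In particular, the left-hand side is independent of t. -/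
/-!
Expanding both exponentials and taking traces termwise, the `n`-th terms agree for `n ≥ 1`
because `tr((D₋D₊)ⁿ) = tr(D₋ (D₊D₋)ⁿ⁻¹ D₊) = tr((D₊D₋)ⁿ)` by cyclicity of the trace. Only the
`n = 0` terms survive, giving `dim V₊ − dim V₋`, and this equals `dim ker D₊ − dim ker D₋` by
rank–nullity, since `D₊` and its adjoint `D₋` have the same rank.
-/

open scoped Nat
open Module

namespace LinearMap

variable {R M N : Type*} [CommRing R] [AddCommGroup M] [Module R M] [AddCommGroup N] [Module R N]

theorem comp_pow_succ (f : M →ₗ[R] N) (g : N →ₗ[R] M) (k : ℕ) :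
    (g ∘ₗ f) ^ (k + 1) = g ∘ₗ ((f ∘ₗ g) ^ k) ∘ₗ f := by
  induction k with
  | zero => rfl
  | succ k ih =>
    rw [pow_succ, ih, pow_succ]
    rfl

theorem trace_comp_pow_succ_comm [Module.Free R M] [Module.Finite R M] [Module.Free R N]
    [Module.Finite R N] (f : M →ₗ[R] N) (g : N →ₗ[R] M) (k : ℕ) :
    trace R M ((g ∘ₗ f) ^ (k + 1)) = trace R N ((f ∘ₗ g) ^ (k + 1)) := by
  rw [comp_pow_succ, trace_comp_comm', pow_succ]
  rfl

end LinearMap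

namespace ContinuousLinearMap

variable {𝕂 V W : Type*} [RCLike 𝕂] [NormedAddCommGroup V] [NormedSpace 𝕂 V]
  [FiniteDimensional 𝕂 V] [NormedAddCommGroup W] [NormedSpace 𝕂 W] [FiniteDimensional 𝕂 W]

theorem hasSum_trace_exp (x : V →L[𝕂] V) :
    HasSum (fun n => (n !⁻¹ : 𝕂) * LinearMap.trace 𝕂 V ((x : V →ₗ[𝕂] V) ^ n))
      (LinearMap.trace 𝕂 V (NormedSpace.exp x : V →L[𝕂] V)) := by
  have : CompleteSpace V := FiniteDimensional.complete 𝕂 V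
  let trace : (V →L[𝕂] V) →L[𝕂] 𝕂 :=
    LinearMap.toContinuousLinearMap (LinearMap.trace 𝕂 V ∘ₗ coeLM 𝕂)
  simpa [trace, toLinearMap_pow] using
    (NormedSpace.exp_series_hasSum_exp' (𝕂 := 𝕂) x).mapL trace

theorem trace_exp_comp_sub_trace_exp_comp (f : V →L[𝕂] W) (g : W →L[𝕂] V) :
    LinearMap.trace 𝕂 V (NormedSpace.exp (g ∘L f) : V →L[𝕂] V)
      - LinearMap.trace 𝕂 W (NormedSpace.exp (f ∘L g) : W →L[𝕂] W)
      = finrank 𝕂 V - finrank 𝕂 W := by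
  have hterms : (fun n : ℕ => (n !⁻¹ : 𝕂) * LinearMap.trace 𝕂 V (((g ∘L f) : V →ₗ[𝕂] V) ^ n)
      - (n !⁻¹ : 𝕂) * LinearMap.trace 𝕂 W (((f ∘L g) : W →ₗ[𝕂] W) ^ n))
      = Pi.single 0 ((finrank 𝕂 V : 𝕂) - finrank 𝕂 W) := by
    ext (_ | k)
    · simp [LinearMap.trace_one]
    · rw [toLinearMap_comp, toLinearMap_comp, LinearMap.trace_comp_pow_succ_comm, sub_self,
        Pi.single_eq_of_ne k.succ_ne_zero]
  have hsum := (hasSum_trace_exp (g ∘L f)).sub (hasSum_trace_exp (f ∘L g))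
  rw [hterms] at hsum
  exact hsum.unique (hasSum_pi_single 0 _)

end ContinuousLinearMap

theorem LinearMap.finrank_ker_adjoint_add_finrank {𝕜 E F : Type*} [RCLike 𝕜]
    [NormedAddCommGroup E] [InnerProductSpace 𝕜 E] [FiniteDimensional 𝕜 E]
    [NormedAddCommGroup F] [InnerProductSpace 𝕜 F] [FiniteDimensional 𝕜 F] (A : E →ₗ[𝕜] F) :
    finrank 𝕜 (ker A.adjoint) + finrank 𝕜 E = finrank 𝕜 (ker A) + finrank 𝕜 F := by
  have := A.finrank_range_add_finrank_ker
  have := A.adjoint.finrank_range_add_finrank_ker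
  have := A.finrank_range_adjoint
  omega

theorem mcKean_singer_general {Vp Vm : Type*} [NormedAddCommGroup Vp] [InnerProductSpace ℂ Vp]
    [NormedAddCommGroup Vm] [InnerProductSpace ℂ Vm]
    [FiniteDimensional ℂ Vp] [FiniteDimensional ℂ Vm]
    (Dp : Vp →L[ℂ] Vm) (Dm : Vm →L[ℂ] Vp)
    (hadj : ∀ (u : Vp) (v : Vm), (@inner ℂ Vm _ (Dp u) v) = @inner ℂ Vp _ u (Dm v))
    (t : ℝ) :
    LinearMap.trace ℂ Vp ((NormedSpace.exp (-(t : ℂ) • (Dm.comp Dp)) : Vp →L[ℂ] Vp) : Vp →ₗ[ℂ] Vp)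
      - LinearMap.trace ℂ Vm
          ((NormedSpace.exp (-(t : ℂ) • (Dp.comp Dm)) : Vm →L[ℂ] Vm) : Vm →ₗ[ℂ] Vm)
      = (Module.finrank ℂ (LinearMap.ker (Dp : Vp →ₗ[ℂ] Vm)) : ℂ)
        - (Module.finrank ℂ (LinearMap.ker (Dm : Vm →ₗ[ℂ] Vp)) : ℂ) := by
  have hDp : (Dp : Vp →ₗ[ℂ] Vm) = (Dm : Vm →ₗ[ℂ] Vp).adjoint :=
    (LinearMap.eq_adjoint_iff _ _).2 hadj
  have hdim := (Dm : Vm →ₗ[ℂ] Vp).finrank_ker_adjoint_add_finrank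
  rw [← ContinuousLinearMap.smul_comp, ← ContinuousLinearMap.comp_smul,
    ContinuousLinearMap.trace_exp_comp_sub_trace_exp_comp, hDp]
  have hdimℂ := congrArg (Nat.cast : ℕ → ℂ) hdim
  push_cast at hdimℂ
  linear_combination -hdimℂ

/-- **McKean–Singer identity in finite dimensions.**
For adjoint operators `D₊ : V₊ → V₋`, `D₋ : V₋ → V₊` between finite-dimensional complex
inner product spaces and any `t > 0`,
`tr(exp(−t·D₋D₊)) − tr(exp(−t·D₊D₋)) = dim ker D₊ − dim ker D₋`;
in particular the left-hand side is independent of `t`. -/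
theorem mcKean_singer {Vp Vm : Type*} [NormedAddCommGroup Vp] [InnerProductSpace ℂ Vp]
    [NormedAddCommGroup Vm] [InnerProductSpace ℂ Vm]
    [FiniteDimensional ℂ Vp] [FiniteDimensional ℂ Vm]
    (Dp : Vp →L[ℂ] Vm) (Dm : Vm →L[ℂ] Vp)
    (hadj : ∀ (u : Vp) (v : Vm), (@inner ℂ Vm _ (Dp u) v) = @inner ℂ Vp _ u (Dm v))
    (t : ℝ) (ht : 0 < t) :
    LinearMap.trace ℂ Vp ((NormedSpace.exp (-(t : ℂ) • (Dm.comp Dp)) : Vp →L[ℂ] Vp) : Vp →ₗ[ℂ] Vp)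
      - LinearMap.trace ℂ Vm
          ((NormedSpace.exp (-(t : ℂ) • (Dp.comp Dm)) : Vm →L[ℂ] Vm) : Vm →ₗ[ℂ] Vm)
      = (Module.finrank ℂ (LinearMap.ker (Dp : Vp →ₗ[ℂ] Vm)) : ℂ)
        - (Module.finrank ℂ (LinearMap.ker (Dm : Vm →ₗ[ℂ] Vp)) : ℂ) :=
  mcKean_singer_general Dp Dm hadj t
end
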